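/- arXiv:1705.00984 — 3 statements merged into one kernel-verified Lean document; each statement's English description precedes it below -/
import Mathlib

section
/- Double Greibach normal form: for every context-free grammar G there exists a context-free grammar G' in which the first and the last character of the right-hand side of every production are terminal characters, such that L(G') = L(G) \ {ε}. -/
/-!
First the grammar is made proper: its nonterminals are the symbols `s` of `G`, with a rule `s → a`
whenever `s ⇒* a`, and a rule `s → σ` whenever `s ⇒* σ` for a subsequence `σ`, of length at least
two, of a right-hand side of `G`. This removes ε-rules and unit rules at once, and the grammar
generates `L(G) \ {ε}`.

In a proper grammar every word of `A` reads `a w`, where `X → a γ` is the rule at the bottom of the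
left spine of a parse tree of `A`. A left-corner construction exposes this `a`: new nonterminals
`(X, U)` derive the words `w` with `U ⇒⁺ X w` along a left spine, and their rules take
a step off both ends of the spine at once. The bottom piece begins with a terminal (after
substituting for its leading nonterminal), and the top piece is the tail of a rule of the original
grammar. So every new rule begins with a terminal, and it ends with a terminal whenever all original
rules do. Applying the construction, reversing, applying it again and reversing back thus gives a
grammar for the same language whose rules begin and end with terminals.
-/

def Symbol.map {T N N' : Type*} (f : N → N') : Symbol T N → Symbol T N'
  | .terminal a => .terminal a
  | .nonterminal n => .nonterminal (f n)

section SymbolLists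

variable {T N : Type*} {β : List (Symbol T N)} {b : T}

theorem getLast?_map_symbolMap {N' : Type*} {f : N → N'} (h : β.getLast? = some (.terminal b)) :
    (β.map (Symbol.map f)).getLast? = some (.terminal b) := by
  simp [List.getLast?_map, h, Symbol.map]

theorem getLast?_of_nonterminal_cons {X : N}
    (h : (.nonterminal X :: β).getLast? = some (.terminal b)) : β.getLast? = some (.terminal b) := by
  cases β with
  | nil => simp at h
  | cons s β => simpa [List.getLast?_cons] using h

end SymbolLists

namespace ContextFreeRule

variable {T N : Type*} (r : ContextFreeRule T N)

def IsProper : Prop := r.output ≠ [] ∧ ∀ n, r.output ≠ [.nonterminal n]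

def StartsWithTerminal : Prop := ∃ a, r.output.head? = some (.terminal a)

def EndsWithTerminal : Prop := ∃ b, r.output.getLast? = some (.terminal b)

variable {r}

@[simp] theorem endsWithTerminal_reverse : r.reverse.EndsWithTerminal ↔ r.StartsWithTerminal := by
  simp [EndsWithTerminal, StartsWithTerminal, reverse]

@[simp] theorem startsWithTerminal_reverse :
    r.reverse.StartsWithTerminal ↔ r.EndsWithTerminal := by
  simp [EndsWithTerminal, StartsWithTerminal, reverse]

theorem EndsWithTerminal.isProper (h : r.EndsWithTerminal) : r.IsProper := by
  obtain ⟨a, ha⟩ := h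
  exact ⟨fun h => by simp [h] at ha, fun n h => by simp [h] at ha⟩

end ContextFreeRule

namespace ContextFreeGrammar

section Yield

/-- `w` splits into one piece per symbol of `α`: a terminal is its own piece, and the piece `u` of a
nonterminal `n` satisfies `S n u`. -/
inductive Yield {T N : Type*} (S : N → List T → Prop) : List (Symbol T N) → List T → Prop
  | nil : Yield S [] []
  | terminal {α w} (a : T) : Yield S α w → Yield S (.terminal a :: α) (a :: w)
  | nonterminal {α u w} {n : N} : S n u → Yield S α w → Yield S (.nonterminal n :: α) (u ++ w)

variable {T N : Type*} {S S' : N → List T → Prop} {α β : List (Symbol T N)} {w : List T}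

theorem Yield.append {u v : List T} (hα : Yield S α u) (hβ : Yield S β v) :
    Yield S (α ++ β) (u ++ v) := by
  induction hα with
  | nil => exact hβ
  | terminal a _ ih => exact .terminal a ih
  | nonterminal hn _ ih => rw [List.append_assoc]; exact .nonterminal hn ih

theorem yield_append_iff :
    Yield S (α ++ β) w ↔ ∃ u v, w = u ++ v ∧ Yield S α u ∧ Yield S β v := by
  refine ⟨fun h => ?_, fun ⟨u, v, hw, hα, hβ⟩ => hw ▸ hα.append hβ⟩
  induction α generalizing w with
  | nil => exact ⟨[], w, rfl, .nil, h⟩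
  | cons s α ih =>
    rcases h with _ | ⟨a, h⟩ | ⟨hn, h⟩
    · obtain ⟨u, v, rfl, hα, hβ⟩ := ih h
      exact ⟨a :: u, v, rfl, .terminal a hα, hβ⟩
    · obtain ⟨u, v, rfl, hα, hβ⟩ := ih h
      exact ⟨_ ++ u, v, (List.append_assoc ..).symm, .nonterminal hn hα, hβ⟩

@[simp] theorem yield_nil_iff : Yield S [] w ↔ w = [] :=
  ⟨fun h => by cases h; rfl, fun h => h ▸ .nil⟩

theorem yield_terminal_cons_iff {a : T} :
    Yield S (.terminal a :: α) w ↔ ∃ v, w = a :: v ∧ Yield S α v :=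
  ⟨fun h => by cases h with | terminal _ h => exact ⟨_, rfl, h⟩,
    fun ⟨_, hw, h⟩ => hw ▸ .terminal a h⟩

theorem yield_nonterminal_cons_iff {n : N} :
    Yield S (.nonterminal n :: α) w ↔ ∃ u v, w = u ++ v ∧ S n u ∧ Yield S α v :=
  ⟨fun h => by cases h with | nonterminal hn h => exact ⟨_, _, rfl, hn, h⟩,
    fun ⟨_, _, hw, hn, h⟩ => hw ▸ .nonterminal hn h⟩

@[simp] theorem yield_singleton_nonterminal_iff {n : N} : Yield S [.nonterminal n] w ↔ S n w := by
  simp [yield_nonterminal_cons_iff]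

@[simp] theorem yield_singleton_terminal_iff {a : T} : Yield S [.terminal a] w ↔ w = [a] := by
  simp [yield_terminal_cons_iff]

theorem yield_map_terminal (w : List T) : Yield S (w.map .terminal) w := by
  induction w with
  | nil => exact .nil
  | cons a w ih => exact .terminal a ih

theorem Yield.mono (hS : ∀ n u, S n u → S' n u) (h : Yield S α w) : Yield S' α w := by
  induction h with
  | nil => exact .nil
  | terminal a _ ih => exact .terminal a ih
  | nonterminal hn _ ih => exact .nonterminal (hS _ _ hn) ih

theorem Yield.ne_nil (hS : ∀ n u, S n u → u ≠ []) (h : Yield S α w) (hα : α ≠ []) : w ≠ [] := by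
  cases h with
  | nil => exact absurd rfl hα
  | terminal => simp
  | nonterminal hn => simp [hS _ _ hn]

theorem yield_map_iff {N' : Type*} {S : N' → List T → Prop} (f : N → N') :
    Yield S (α.map (Symbol.map f)) w ↔ Yield (fun n => S (f n)) α w := by
  induction α generalizing w with
  | nil => simp
  | cons s α ih =>
    cases s <;> simp [Symbol.map, yield_terminal_cons_iff, yield_nonterminal_cons_iff, ih]

end Yield

section Derivations

variable {T : Type*} (g : ContextFreeGrammar T)

def IsProper : Prop := ∀ r ∈ g.rules, r.IsProper

def DerivesWord (n : g.NT) (w : List T) : Prop :=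
  g.Derives [.nonterminal n] (w.map .terminal)

variable {g} {α : List (Symbol T g.NT)} {w : List T}

theorem derives_of_yield (h : Yield g.DerivesWord α w) : g.Derives α (w.map .terminal) := by
  induction h with
  | nil => rfl
  | terminal a _ ih => simpa using ih.append_left [.terminal a]
  | @nonterminal α u w n hn _ ih =>
    simpa using (hn.append_right α).trans (ih.append_left (u.map .terminal))

theorem DerivesWord.of_rule {r : ContextFreeRule T g.NT} (hr : r ∈ g.rules)
    (h : Yield g.DerivesWord r.output w) : g.DerivesWord r.input w :=
  (Produces.single ⟨r, hr, .input_output⟩).trans (derives_of_yield h)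

theorem DerivesWord.of_rule_nonterminal_cons {U X : g.NT} {β : List (Symbol T g.NT)}
    (hr : ⟨U, .nonterminal X :: β⟩ ∈ g.rules) {u v : List T} (hu : g.DerivesWord X u)
    (hv : Yield g.DerivesWord β v) : g.DerivesWord U (u ++ v) :=
  .of_rule hr (.nonterminal hu hv)

theorem Yield.of_derives {S : g.NT → List T → Prop}
    (hS : ∀ r ∈ g.rules, ∀ w, Yield S r.output w → S r.input w)
    (h : g.Derives α (w.map .terminal)) : Yield S α w := by
  induction h using Relation.ReflTransGen.head_induction_on with
  | refl => exact yield_map_terminal w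
  | head hp _ ih =>
    obtain ⟨r, hr, hrw⟩ := hp
    obtain ⟨p, q, rfl, rfl⟩ := hrw.exists_parts
    obtain ⟨u, v₃, rfl, h₁₂, h₃⟩ := yield_append_iff.1 ih
    obtain ⟨v₁, v₂, rfl, h₁, h₂⟩ := yield_append_iff.1 h₁₂
    exact (h₁.append ((yield_singleton_nonterminal_iff.2 (hS r hr v₂ h₂)))).append h₃

theorem DerivesWord.induction {S : g.NT → List T → Prop}
    (hS : ∀ r ∈ g.rules, ∀ w, Yield S r.output w → S r.input w) {n : g.NT}
    (h : g.DerivesWord n w) : S n w :=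
  yield_singleton_nonterminal_iff.1 (Yield.of_derives hS h)

theorem DerivesWord.exists_rule {n : g.NT} (h : g.DerivesWord n w) :
    ∃ r ∈ g.rules, r.input = n ∧ Yield g.DerivesWord r.output w := by
  refine h.induction
    (S := fun n w => ∃ r ∈ g.rules, r.input = n ∧ Yield g.DerivesWord r.output w)
    fun r hr w hw => ⟨r, hr, rfl, hw.mono fun n u hnu => ?_⟩
  obtain ⟨r', hr', rfl, hr'u⟩ := hnu
  exact .of_rule hr' hr'u

theorem mem_language_iff_derivesWord : w ∈ g.language ↔ g.DerivesWord g.initial w :=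
  g.mem_language_iff w

theorem forall_mem_reverse_rules {p : ContextFreeRule T g.NT → Prop} :
    (∀ r ∈ g.reverse.rules, p r) ↔ ∀ r ∈ g.rules, p r.reverse :=
  Finset.forall_mem_map

theorem Yield.exists_sublist_ne_nil {S : g.NT → List T → Prop}
    (hS : ∀ n, S n [] → g.Derives [.nonterminal n] []) (h : Yield S α w) :
    ∃ σ, σ.Sublist α ∧ g.Derives α σ ∧ Yield (fun n u => u ≠ [] ∧ S n u) σ w := by
  induction h with
  | nil => exact ⟨[], .slnil, .refl _, .nil⟩
  | terminal a _ ih =>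
    obtain ⟨σ, hsub, hder, hσ⟩ := ih
    exact ⟨.terminal a :: σ, hsub.cons_cons _, hder.append_left [_], .terminal a hσ⟩
  | @nonterminal α u w n hn _ ih =>
    obtain ⟨σ, hsub, hder, hσ⟩ := ih
    rcases eq_or_ne u [] with rfl | hu
    · exact ⟨σ, hsub.cons _, by simpa using ((hS n hn).append_right α).trans hder, hσ⟩
    · exact ⟨.nonterminal n :: σ, hsub.cons_cons _, hder.append_left [_],
        .nonterminal ⟨hu, hn⟩ hσ⟩

end Derivations

section Proper

open scoped Classical

variable {T : Type} (G : ContextFreeGrammar T)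

noncomputable def symbols : Finset (Symbol T G.NT) :=
  insert (.nonterminal G.initial) (G.rules.biUnion fun r => r.output.toFinset)

noncomputable def properRules : Finset (ContextFreeRule T (Symbol T G.NT)) :=
  (((G.symbols ×ˢ G.symbols.preimage Symbol.terminal
      (Function.Injective.injOn fun _ _ => Symbol.terminal.inj)).filter
      fun p => G.Derives [p.1] [.terminal p.2]).image fun p => ⟨p.1, [.terminal p.2]⟩) ∪
  (((G.symbols ×ˢ G.rules.biUnion fun r => r.output.sublists.toFinset).filter
      fun p => 2 ≤ p.2.length ∧ G.Derives [p.1] p.2).image fun p => ⟨p.1, p.2.map .nonterminal⟩)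

noncomputable abbrev toProper : ContextFreeGrammar T :=
  ⟨Symbol T G.NT, .nonterminal G.initial, G.properRules⟩

variable {G}

theorem mem_properRules {r : ContextFreeRule T (Symbol T G.NT)} :
    r ∈ G.properRules ↔
      (∃ s a, s ∈ G.symbols ∧ .terminal a ∈ G.symbols ∧ G.Derives [s] [.terminal a] ∧
        r = ⟨s, [.terminal a]⟩) ∨
      (∃ s σ, s ∈ G.symbols ∧ (∃ r' ∈ G.rules, σ.Sublist r'.output) ∧ 2 ≤ σ.length ∧
        G.Derives [s] σ ∧ r = ⟨s, σ.map .nonterminal⟩) := by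
  simp [properRules, eq_comm, and_assoc]

theorem mem_symbols_of_mem_output {r : ContextFreeRule T G.NT} (hr : r ∈ G.rules)
    {s : Symbol T G.NT} (hs : s ∈ r.output) : s ∈ G.symbols := by
  simp only [symbols, Finset.mem_insert, Finset.mem_biUnion, List.mem_toFinset]
  exact .inr ⟨r, hr, hs⟩

theorem initial_mem_symbols : .nonterminal G.initial ∈ G.symbols :=
  Finset.mem_insert_self _ _

theorem derives_of_yield_map_nonterminal {σ : List (Symbol T G.NT)} {w : List T}
    (h : Yield (fun s u => G.Derives [s] (u.map .terminal)) (σ.map .nonterminal) w) :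
    G.Derives σ (w.map .terminal) := by
  induction σ generalizing w with
  | nil => cases h; rfl
  | cons s σ ih =>
    obtain ⟨u, v, rfl, hs, hσ⟩ := yield_nonterminal_cons_iff.1 h
    simpa using (hs.append_right σ).trans ((ih hσ).append_left _)

theorem toProper_sound {s : Symbol T G.NT} {w : List T} (h : G.toProper.DerivesWord s w) :
    w ≠ [] ∧ G.Derives [s] (w.map .terminal) := by
  refine h.induction (S := fun s w => w ≠ [] ∧ G.Derives [s] (w.map .terminal)) ?_
  intro r hr w hw
  rcases mem_properRules.1 hr with ⟨s, a, -, -, hsa, rfl⟩ | ⟨s, σ, -, -, hσ, hsσ, rfl⟩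
  · obtain rfl : w = [a] := yield_singleton_terminal_iff.1 hw
    exact ⟨List.cons_ne_nil _ _, hsa⟩
  · have hσ : σ.map (Symbol.nonterminal (T := T)) ≠ [] := by
      rw [Ne, List.map_eq_nil_iff]; rintro rfl; simp at hσ
    exact ⟨hw.ne_nil (fun _ _ h => h.1) hσ,
      hsσ.trans (derives_of_yield_map_nonterminal (hw.mono fun _ _ h => h.2))⟩

/-- Quantifying over every `s` with `s ⇒* n` lets unit steps and erased symbols be skipped. -/
def ProperInvariant (n : G.NT) (w : List T) : Prop :=
  G.DerivesWord n w ∧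
    (w ≠ [] → ∀ s ∈ G.symbols, G.Derives [s] [.nonterminal n] → G.toProper.DerivesWord s w)

theorem toProper_derivesWord_of_yield_singleton {s t : Symbol T G.NT} {w : List T}
    (hs : s ∈ G.symbols) (ht : t ∈ G.symbols) (hst : G.Derives [s] [t])
    (h : Yield (fun n u => u ≠ [] ∧ ProperInvariant n u) [t] w) : G.toProper.DerivesWord s w := by
  cases t with
  | terminal a =>
    obtain rfl : w = [a] := yield_singleton_terminal_iff.1 h
    exact .of_rule (g := G.toProper) (r := ⟨s, [.terminal a]⟩)
      (mem_properRules.2 (.inl ⟨s, a, hs, ht, hst, rfl⟩)) (yield_map_terminal [a])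
  | nonterminal n =>
    obtain ⟨hw, -, hn⟩ := yield_singleton_nonterminal_iff.1 h
    exact hn hw s hs hst

theorem toProper_yield_map_nonterminal {σ : List (Symbol T G.NT)} {w : List T}
    (hσ : ∀ t ∈ σ, t ∈ G.symbols) (h : Yield (fun n u => u ≠ [] ∧ ProperInvariant n u) σ w) :
    Yield G.toProper.DerivesWord (σ.map .nonterminal) w := by
  induction σ generalizing w with
  | nil => cases h; exact .nil
  | cons t σ ih =>
    obtain ⟨u, v, rfl, ht, hσ'⟩ := yield_append_iff.1 (show Yield _ ([t] ++ σ) w from h)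
    have htmem := hσ t (List.mem_cons_self ..)
    exact .nonterminal (toProper_derivesWord_of_yield_singleton htmem htmem (.refl _) ht)
      (ih (fun t' ht' => hσ t' (List.mem_cons_of_mem _ ht')) hσ')

theorem properInvariant_of_rule {r : ContextFreeRule T G.NT} (hr : r ∈ G.rules) {w : List T}
    (hw : Yield ProperInvariant r.output w) : ProperInvariant r.input w := by
  refine ⟨.of_rule hr (hw.mono fun _ _ h => h.1), fun hne s hs hsr => ?_⟩
  obtain ⟨σ, hsub, hder, hσ⟩ := hw.exists_sublist_ne_nil fun _ h => h.1
  have hsσ : G.Derives [s] σ := hsr.trans ((Produces.single ⟨r, hr, .input_output⟩).trans hder)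
  have hmem : ∀ t ∈ σ, t ∈ G.symbols := fun t ht => mem_symbols_of_mem_output hr (hsub.subset ht)
  match σ, hσ, hsσ, hmem, hsub with
  | [], hσ, _, _, _ => exact absurd (yield_nil_iff.1 hσ) hne
  | [t], hσ, hsσ, hmem, _ =>
    exact toProper_derivesWord_of_yield_singleton hs (hmem t (List.mem_singleton_self t)) hsσ hσ
  | t₁ :: t₂ :: σ, hσ, hsσ, hmem, hsub =>
    refine .of_rule (g := G.toProper) (r := ⟨s, (t₁ :: t₂ :: σ).map .nonterminal⟩)
      (mem_properRules.2 (.inr ⟨s, _, hs, ⟨r, hr, hsub⟩, by simp, hsσ, rfl⟩)) ?_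
    exact toProper_yield_map_nonterminal hmem hσ

theorem toProper_complete {w : List T} (h : G.DerivesWord G.initial w) (hw : w ≠ []) :
    G.toProper.DerivesWord (.nonterminal G.initial) w :=
  (h.induction fun _ hr _ => properInvariant_of_rule hr).2 hw _ initial_mem_symbols (.refl _)

theorem toProper_language : G.toProper.language = G.language \ {[]} := by
  ext w
  rw [mem_language_iff_derivesWord,
    show w ∈ G.language \ {[]} ↔ w ∈ G.language ∧ w ≠ [] from Iff.rfl, mem_language_iff_derivesWord]
  exact ⟨fun h => (toProper_sound h).symm, fun ⟨h, hw⟩ => toProper_complete h hw⟩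

theorem isProper_toProper : G.toProper.IsProper := by
  intro r hr
  rcases mem_properRules.1 hr with ⟨s, a, -, -, -, rfl⟩ | ⟨s, σ, -, -, hσ, -, rfl⟩
  · exact ⟨List.cons_ne_nil _ _, fun n h => by cases h⟩
  · match σ, hσ with
    | _ :: _ :: _, _ => exact ⟨List.cons_ne_nil _ _, fun n h => by cases h⟩

end Proper

section Greibach

open scoped Classical

variable {T : Type} (g : ContextFreeGrammar T)

/-- The rules for `inl A`, a copy of `A`; the nonterminal `inr (X, U)` stands for the words `w` with
`U ⇒⁺ X w` along a left spine. -/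
inductive IsCornerRule : ContextFreeRule T (g.NT ⊕ g.NT × g.NT) → Prop
  | base {A a γ} : ⟨A, .terminal a :: γ⟩ ∈ g.rules →
      IsCornerRule ⟨.inl A, (.terminal a :: γ).map (.map .inl)⟩
  | step {X a γ A β} : ⟨X, .terminal a :: γ⟩ ∈ g.rules → ⟨A, .nonterminal X :: β⟩ ∈ g.rules →
      IsCornerRule ⟨.inl A, (.terminal a :: γ).map (.map .inl) ++ β.map (.map .inl)⟩
  | spine {X a γ A P β} : ⟨X, .terminal a :: γ⟩ ∈ g.rules → ⟨A, .nonterminal P :: β⟩ ∈ g.rules →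
      IsCornerRule ⟨.inl A, (.terminal a :: γ).map (.map .inl) ++ [.nonterminal (.inr (X, P))] ++
        β.map (.map .inl)⟩

inductive IsExpansion : List (Symbol T g.NT) → List (Symbol T (g.NT ⊕ g.NT × g.NT)) → Prop
  | terminal {a δ} : IsExpansion (.terminal a :: δ) ((.terminal a :: δ).map (.map .inl))
  | nonterminal {B ρ δ} : g.IsCornerRule ⟨.inl B, ρ⟩ →
      IsExpansion (.nonterminal B :: δ) (ρ ++ δ.map (.map .inl))

inductive IsSpineRule : ContextFreeRule T (g.NT ⊕ g.NT × g.NT) → Prop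
  | single {U X β ρ} : ⟨U, .nonterminal X :: β⟩ ∈ g.rules → g.IsExpansion β ρ →
      IsSpineRule ⟨.inr (X, U), ρ⟩
  | double {P X βb U βt ρ} : ⟨P, .nonterminal X :: βb⟩ ∈ g.rules →
      ⟨U, .nonterminal P :: βt⟩ ∈ g.rules → g.IsExpansion βb ρ →
      IsSpineRule ⟨.inr (X, U), ρ ++ βt.map (.map .inl)⟩
  | triple {P X βb U U' βt ρ} : ⟨P, .nonterminal X :: βb⟩ ∈ g.rules →
      ⟨U, .nonterminal U' :: βt⟩ ∈ g.rules → g.IsExpansion βb ρ →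
      IsSpineRule ⟨.inr (X, U), ρ ++ [.nonterminal (.inr (P, U'))] ++ βt.map (.map .inl)⟩

noncomputable def terminalSteps : Finset (g.NT × T × List (Symbol T g.NT)) :=
  g.rules.biUnion fun r => match r.output with
    | .terminal a :: γ => {(r.input, a, γ)}
    | _ => ∅

noncomputable def leftSteps : Finset (g.NT × g.NT × List (Symbol T g.NT)) :=
  g.rules.biUnion fun r => match r.output with
    | .nonterminal X :: β => {(r.input, X, β)}
    | _ => ∅

noncomputable def cornerRuleCandidates : Finset (ContextFreeRule T (g.NT ⊕ g.NT × g.NT)) :=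
  g.terminalSteps.image (fun ⟨A, a, γ⟩ => ⟨.inl A, (.terminal a :: γ).map (.map .inl)⟩) ∪
  (g.terminalSteps ×ˢ g.leftSteps).image (fun ⟨⟨_, a, γ⟩, ⟨A, _, β⟩⟩ =>
    ⟨.inl A, (.terminal a :: γ).map (.map .inl) ++ β.map (.map .inl)⟩) ∪
  (g.terminalSteps ×ˢ g.leftSteps).image (fun ⟨⟨X, a, γ⟩, ⟨A, P, β⟩⟩ =>
    ⟨.inl A, (.terminal a :: γ).map (.map .inl) ++ [.nonterminal (.inr (X, P))] ++
      β.map (.map .inl)⟩)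

noncomputable def expansionCandidates (β : List (Symbol T g.NT)) :
    Finset (List (Symbol T (g.NT ⊕ g.NT × g.NT))) :=
  insert (β.map (.map .inl)) (g.cornerRuleCandidates.image (·.output ++ β.tail.map (.map .inl)))

noncomputable def spineRuleCandidates : Finset (ContextFreeRule T (g.NT ⊕ g.NT × g.NT)) :=
  g.leftSteps.biUnion (fun ⟨U, X, β⟩ => (g.expansionCandidates β).image (⟨.inr (X, U), ·⟩)) ∪
  (g.leftSteps ×ˢ g.leftSteps).biUnion (fun ⟨⟨_, X, βb⟩, ⟨U, _, βt⟩⟩ =>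
    (g.expansionCandidates βb).image (⟨.inr (X, U), · ++ βt.map (.map .inl)⟩)) ∪
  (g.leftSteps ×ˢ g.leftSteps).biUnion (fun ⟨⟨P, X, βb⟩, ⟨U, U', βt⟩⟩ =>
    (g.expansionCandidates βb).image
      (⟨.inr (X, U), · ++ [.nonterminal (.inr (P, U'))] ++ βt.map (.map .inl)⟩))

noncomputable def greibachRules : Finset (ContextFreeRule T (g.NT ⊕ g.NT × g.NT)) :=
  g.cornerRuleCandidates.filter g.IsCornerRule ∪ g.spineRuleCandidates.filter g.IsSpineRule

noncomputable abbrev toGreibach : ContextFreeGrammar T :=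
  ⟨g.NT ⊕ g.NT × g.NT, .inl g.initial, g.greibachRules⟩

variable {g}

theorem mem_terminalSteps {X : g.NT} {a : T} {γ : List (Symbol T g.NT)}
    (h : ⟨X, .terminal a :: γ⟩ ∈ g.rules) : (X, a, γ) ∈ g.terminalSteps :=
  Finset.mem_biUnion.2 ⟨_, h, Finset.mem_singleton_self _⟩

theorem mem_leftSteps {U X : g.NT} {β : List (Symbol T g.NT)}
    (h : ⟨U, .nonterminal X :: β⟩ ∈ g.rules) : (U, X, β) ∈ g.leftSteps :=
  Finset.mem_biUnion.2 ⟨_, h, Finset.mem_singleton_self _⟩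

theorem IsCornerRule.mem_candidates {r : ContextFreeRule T (g.NT ⊕ g.NT × g.NT)}
    (h : g.IsCornerRule r) : r ∈ g.cornerRuleCandidates := by
  simp only [cornerRuleCandidates, Finset.mem_union, Finset.mem_image, Finset.mem_product]
  rcases h with ⟨h⟩ | ⟨h₁, h₂⟩ | ⟨h₁, h₂⟩
  · exact .inl (.inl ⟨_, mem_terminalSteps h, rfl⟩)
  · exact .inl (.inr ⟨(_, _), ⟨mem_terminalSteps h₁, mem_leftSteps h₂⟩, rfl⟩)
  · exact .inr ⟨(_, _), ⟨mem_terminalSteps h₁, mem_leftSteps h₂⟩, rfl⟩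

theorem IsExpansion.mem_candidates {β : List (Symbol T g.NT)}
    {ρ : List (Symbol T (g.NT ⊕ g.NT × g.NT))} (h : g.IsExpansion β ρ) :
    ρ ∈ g.expansionCandidates β := by
  rcases h with _ | ⟨h⟩
  · exact Finset.mem_insert_self _ _
  · exact Finset.mem_insert_of_mem (Finset.mem_image.2 ⟨_, h.mem_candidates, rfl⟩)

theorem IsSpineRule.mem_candidates {r : ContextFreeRule T (g.NT ⊕ g.NT × g.NT)}
    (h : g.IsSpineRule r) : r ∈ g.spineRuleCandidates := by
  simp only [spineRuleCandidates, Finset.mem_union, Finset.mem_biUnion, Finset.mem_image,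
    Finset.mem_product]
  rcases h with ⟨h, hρ⟩ | ⟨h₁, h₂, hρ⟩ | ⟨h₁, h₂, hρ⟩
  · exact .inl (.inl ⟨_, mem_leftSteps h, _, hρ.mem_candidates, rfl⟩)
  · exact .inl (.inr ⟨(_, _), ⟨mem_leftSteps h₁, mem_leftSteps h₂⟩, _, hρ.mem_candidates, rfl⟩)
  · exact .inr ⟨(_, _), ⟨mem_leftSteps h₁, mem_leftSteps h₂⟩, _, hρ.mem_candidates, rfl⟩

theorem mem_toGreibach_rules {r : ContextFreeRule T (g.NT ⊕ g.NT × g.NT)} :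
    r ∈ g.toGreibach.rules ↔ g.IsCornerRule r ∨ g.IsSpineRule r := by
  simp only [greibachRules, Finset.mem_union, Finset.mem_filter]
  exact ⟨Or.imp And.right And.right,
    Or.imp (fun h => ⟨h.mem_candidates, h⟩) (fun h => ⟨h.mem_candidates, h⟩)⟩

variable (g) in
def greibachSem : g.NT ⊕ g.NT × g.NT → List T → Prop
  | .inl A => g.DerivesWord A
  | .inr (X, U) => fun w => ∀ z, g.DerivesWord X z → g.DerivesWord U (z ++ w)

theorem yield_greibachSem_map_inl {β : List (Symbol T g.NT)} {w : List T} :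
    Yield g.greibachSem (β.map (.map .inl)) w ↔ Yield g.DerivesWord β w :=
  yield_map_iff _

theorem IsCornerRule.sound {r : ContextFreeRule T (g.NT ⊕ g.NT × g.NT)} (hr : g.IsCornerRule r)
    {w : List T} (hw : Yield g.greibachSem r.output w) : g.greibachSem r.input w := by
  rcases hr with ⟨h⟩ | ⟨h₁, h₂⟩ | ⟨h₁, h₂⟩
  · exact .of_rule h (yield_greibachSem_map_inl.1 hw)
  · obtain ⟨u, v, rfl, hu, hv⟩ := yield_append_iff.1 hw
    exact DerivesWord.of_rule_nonterminal_cons h₂ (.of_rule h₁ (yield_greibachSem_map_inl.1 hu))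
      (yield_greibachSem_map_inl.1 hv)
  · obtain ⟨um, v, rfl, hum, hv⟩ := yield_append_iff.1 hw
    obtain ⟨u, m, rfl, hu, hm⟩ := yield_append_iff.1 hum
    exact DerivesWord.of_rule_nonterminal_cons h₂
      (yield_singleton_nonterminal_iff.1 hm _ (.of_rule h₁ (yield_greibachSem_map_inl.1 hu)))
      (yield_greibachSem_map_inl.1 hv)

theorem IsExpansion.sound {β : List (Symbol T g.NT)} {ρ : List (Symbol T (g.NT ⊕ g.NT × g.NT))}
    (hρ : g.IsExpansion β ρ) {w : List T} (hw : Yield g.greibachSem ρ w) :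
    Yield g.DerivesWord β w := by
  rcases hρ with _ | ⟨h⟩
  · exact yield_greibachSem_map_inl.1 hw
  · obtain ⟨u, v, rfl, hu, hv⟩ := yield_append_iff.1 hw
    exact .nonterminal (h.sound hu) (yield_greibachSem_map_inl.1 hv)

theorem IsSpineRule.sound {r : ContextFreeRule T (g.NT ⊕ g.NT × g.NT)} (hr : g.IsSpineRule r)
    {w : List T} (hw : Yield g.greibachSem r.output w) : g.greibachSem r.input w := by
  rcases hr with ⟨h, hρ⟩ | ⟨h₁, h₂, hρ⟩ | ⟨h₁, h₂, hρ⟩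
  · exact fun z hz => DerivesWord.of_rule_nonterminal_cons h hz (hρ.sound hw)
  · obtain ⟨u, v, rfl, hu, hv⟩ := yield_append_iff.1 hw
    exact fun z hz => List.append_assoc .. ▸ DerivesWord.of_rule_nonterminal_cons h₂
      (DerivesWord.of_rule_nonterminal_cons h₁ hz (hρ.sound hu)) (yield_greibachSem_map_inl.1 hv)
  · obtain ⟨um, v, rfl, hum, hv⟩ := yield_append_iff.1 hw
    obtain ⟨u, m, rfl, hu, hm⟩ := yield_append_iff.1 hum
    refine fun z hz => ?_
    have hP := DerivesWord.of_rule_nonterminal_cons h₁ hz (hρ.sound hu)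
    simpa [List.append_assoc] using DerivesWord.of_rule_nonterminal_cons h₂
      (yield_singleton_nonterminal_iff.1 hm _ hP) (yield_greibachSem_map_inl.1 hv)

theorem toGreibach_sound {n : g.NT ⊕ g.NT × g.NT} {w : List T}
    (h : g.toGreibach.DerivesWord n w) : g.greibachSem n w :=
  h.induction fun _ hr _ hw => (mem_toGreibach_rules.1 hr).elim (·.sound hw) (·.sound hw)

variable (g) in
/-- `U ⇒⁺ X w` along a left spine, the side branches deriving their pieces of `w` as prescribed by
`S`. The constructors peel off the bottom and the top step, like the rules for `inr (X, U)`. -/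
inductive LeftSpine (S : g.NT → List T → Prop) : g.NT → g.NT → List T → Prop
  | single {U X β w} : ⟨U, .nonterminal X :: β⟩ ∈ g.rules → Yield S β w → LeftSpine S X U w
  | double {P X βb U βt wb wt} : ⟨P, .nonterminal X :: βb⟩ ∈ g.rules →
      ⟨U, .nonterminal P :: βt⟩ ∈ g.rules → Yield S βb wb → Yield S βt wt →
      LeftSpine S X U (wb ++ wt)
  | triple {P X βb U' U βt wb wm wt} : ⟨P, .nonterminal X :: βb⟩ ∈ g.rules →
      LeftSpine S P U' wm → ⟨U, .nonterminal U' :: βt⟩ ∈ g.rules → Yield S βb wb →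
      Yield S βt wt → LeftSpine S X U (wb ++ wm ++ wt)

theorem LeftSpine.extend_top {S : g.NT → List T → Prop} {X P U : g.NT} {w v : List T}
    {β : List (Symbol T g.NT)} (h : g.LeftSpine S X P w)
    (hr : ⟨U, .nonterminal P :: β⟩ ∈ g.rules) (hβ : Yield S β v) : g.LeftSpine S X U (w ++ v) := by
  induction h generalizing U v β with
  | single h₁ hb => exact .double h₁ hr hb hβ
  | double h₁ h₂ hb ht => exact .triple h₁ (.single h₂ ht) hr hb hβ
  | triple h₁ _ h₂ hb ht ih =>
    simpa [List.append_assoc] using LeftSpine.triple h₁ (ih h₂ ht) hr hb hβ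

theorem IsProper.tail_ne_nil (hg : g.IsProper) {U X : g.NT} {β : List (Symbol T g.NT)}
    (hr : ⟨U, .nonterminal X :: β⟩ ∈ g.rules) : β ≠ [] := by
  rintro rfl
  exact (hg _ hr).2 X rfl

theorem exists_isExpansion {β : List (Symbol T g.NT)} {w : List T} (hβ : β ≠ [])
    (h : Yield (fun B => g.toGreibach.DerivesWord (.inl B)) β w) :
    ∃ ρ, g.IsExpansion β ρ ∧ Yield g.toGreibach.DerivesWord ρ w := by
  match β, hβ with
  | .terminal a :: δ, _ => exact ⟨_, .terminal, (yield_map_iff _).2 h⟩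
  | .nonterminal B :: δ, _ =>
    obtain ⟨u, v, rfl, hu, hv⟩ := yield_nonterminal_cons_iff.1 h
    obtain ⟨⟨_, ρ⟩, hr, rfl, hρ⟩ := hu.exists_rule
    rcases mem_toGreibach_rules.1 hr with hr | hr
    · exact ⟨_, .nonterminal hr, hρ.append ((yield_map_iff _).2 hv)⟩
    · cases hr

theorem LeftSpine.toGreibach (hg : g.IsProper) {X U : g.NT} {w : List T}
    (h : g.LeftSpine (fun B => g.toGreibach.DerivesWord (.inl B)) X U w) :
    g.toGreibach.DerivesWord (.inr (X, U)) w := by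
  induction h with
  | single hr hb =>
    obtain ⟨ρ, hρ, hyρ⟩ := exists_isExpansion (hg.tail_ne_nil hr) hb
    exact .of_rule (mem_toGreibach_rules.2 (.inr (.single hr hρ))) hyρ
  | double h₁ h₂ hb ht =>
    obtain ⟨ρ, hρ, hyρ⟩ := exists_isExpansion (hg.tail_ne_nil h₁) hb
    exact .of_rule (mem_toGreibach_rules.2 (.inr (.double h₁ h₂ hρ)))
      (hyρ.append ((yield_map_iff _).2 ht))
  | triple h₁ _ h₂ hb ht ih =>
    obtain ⟨ρ, hρ, hyρ⟩ := exists_isExpansion (hg.tail_ne_nil h₁) hb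
    exact .of_rule (mem_toGreibach_rules.2 (.inr (.triple h₁ h₂ hρ)))
      ((hyρ.append (yield_singleton_nonterminal_iff.2 ih)).append ((yield_map_iff _).2 ht))

variable (g) in
inductive LeftCornerParse (S : g.NT → List T → Prop) : g.NT → List T → Prop
  | base {A a γ v} : ⟨A, .terminal a :: γ⟩ ∈ g.rules → Yield S γ v → LeftCornerParse S A (a :: v)
  | step {X a γ v A β t} : ⟨X, .terminal a :: γ⟩ ∈ g.rules → Yield S γ v →
      ⟨A, .nonterminal X :: β⟩ ∈ g.rules → Yield S β t → LeftCornerParse S A (a :: v ++ t)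
  | spine {X a γ v P m A β t} : ⟨X, .terminal a :: γ⟩ ∈ g.rules → Yield S γ v →
      g.LeftSpine S X P m → ⟨A, .nonterminal P :: β⟩ ∈ g.rules → Yield S β t →
      LeftCornerParse S A (a :: v ++ m ++ t)

theorem LeftCornerParse.toGreibach (hg : g.IsProper) {A : g.NT} {w : List T}
    (h : g.LeftCornerParse (fun B => g.toGreibach.DerivesWord (.inl B)) A w) :
    g.toGreibach.DerivesWord (.inl A) w := by
  rcases h with ⟨hr, hv⟩ | ⟨h₁, hv, h₂, ht⟩ | ⟨h₁, hv, hm, h₂, ht⟩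
  · exact .of_rule (mem_toGreibach_rules.2 (.inl (.base hr)))
      (.terminal _ ((yield_map_iff _).2 hv))
  · exact .of_rule (mem_toGreibach_rules.2 (.inl (.step h₁ h₂)))
      ((Yield.terminal _ ((yield_map_iff _).2 hv)).append ((yield_map_iff _).2 ht))
  · refine .of_rule (mem_toGreibach_rules.2 (.inl (.spine h₁ h₂))) ?_
    exact ((Yield.terminal _ ((yield_map_iff _).2 hv)).append
      (yield_singleton_nonterminal_iff.2 (hm.toGreibach hg))).append ((yield_map_iff _).2 ht)

theorem LeftCornerParse.of_rule (hg : g.IsProper) {S : g.NT → List T → Prop}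
    (hS : ∀ B u, g.LeftCornerParse S B u → S B u) {r : ContextFreeRule T g.NT}
    (hr : r ∈ g.rules) {w : List T} (hw : Yield (g.LeftCornerParse S) r.output w) :
    g.LeftCornerParse S r.input w := by
  obtain ⟨A, α⟩ := r
  match α, hr, hw with
  | [], hr, _ => exact ((hg _ hr).1 rfl).elim
  | .terminal a :: γ, hr, hw =>
    obtain ⟨v, rfl, hv⟩ := yield_terminal_cons_iff.1 hw
    exact .base hr (hv.mono hS)
  | .nonterminal P :: β, hr, hw =>
    obtain ⟨u, t, rfl, hu, ht⟩ := yield_nonterminal_cons_iff.1 hw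
    rcases hu with ⟨h₁, hv⟩ | ⟨h₁, hv, h₂, ht'⟩ | ⟨h₁, hv, hm, h₂, ht'⟩
    · exact .step h₁ hv hr (ht.mono hS)
    · simpa [List.append_assoc] using
        LeftCornerParse.spine h₁ hv (.single h₂ ht') hr (ht.mono hS)
    · simpa [List.append_assoc] using
        LeftCornerParse.spine h₁ hv (hm.extend_top h₂ ht') hr (ht.mono hS)

theorem toGreibach_complete (hg : g.IsProper) {A : g.NT} {w : List T} (h : g.DerivesWord A w) :
    g.toGreibach.DerivesWord (.inl A) w :=
  (h.induction fun _ hr _ hw => LeftCornerParse.of_rule hg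
    (fun _ _ => LeftCornerParse.toGreibach hg) hr hw).toGreibach hg

theorem toGreibach_language (hg : g.IsProper) : g.toGreibach.language = g.language := by
  ext w
  exact ⟨fun h => toGreibach_sound (n := .inl _) h, toGreibach_complete hg⟩

theorem IsCornerRule.startsWithTerminal {r : ContextFreeRule T (g.NT ⊕ g.NT × g.NT)}
    (h : g.IsCornerRule r) : r.StartsWithTerminal := by
  rcases h with @⟨_, a⟩ | @⟨_, a⟩ | @⟨_, a⟩ <;> exact ⟨a, rfl⟩

theorem IsExpansion.startsWithTerminal {β : List (Symbol T g.NT)}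
    {ρ : List (Symbol T (g.NT ⊕ g.NT × g.NT))} (h : g.IsExpansion β ρ) :
    ∃ a, ρ.head? = some (.terminal a) := by
  rcases h with @⟨a⟩ | ⟨h⟩
  · exact ⟨a, rfl⟩
  · obtain ⟨a, ha⟩ := h.startsWithTerminal
    exact ⟨a, by simp_all [List.head?_append]⟩

theorem startsWithTerminal_of_mem_toGreibach_rules {r : ContextFreeRule T (g.NT ⊕ g.NT × g.NT)}
    (hr : r ∈ g.toGreibach.rules) : r.StartsWithTerminal := by
  rcases mem_toGreibach_rules.1 hr with h | h
  · exact h.startsWithTerminal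
  · rcases h with ⟨_, hρ⟩ | ⟨_, _, hρ⟩ | ⟨_, _, hρ⟩ <;>
    · obtain ⟨a, ha⟩ := hρ.startsWithTerminal
      exact ⟨a, by simp [List.head?_append, ha]⟩

theorem IsExpansion.getLast? {β : List (Symbol T g.NT)}
    {ρ : List (Symbol T (g.NT ⊕ g.NT × g.NT))} (h : g.IsExpansion β ρ) {b : T}
    (hb : β.getLast? = some (.terminal b)) : ρ.getLast? = some (.terminal b) := by
  rcases h with _ | _
  · exact getLast?_map_symbolMap hb
  · exact List.mem_getLast?_append_of_mem_getLast?
      (getLast?_map_symbolMap (getLast?_of_nonterminal_cons hb))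

theorem endsWithTerminal_of_mem_toGreibach_rules (hg : ∀ r ∈ g.rules, r.EndsWithTerminal)
    {r : ContextFreeRule T (g.NT ⊕ g.NT × g.NT)} (hr : r ∈ g.toGreibach.rules) :
    r.EndsWithTerminal := by
  rcases mem_toGreibach_rules.1 hr with h | h
  · rcases h with ⟨h⟩ | ⟨_, h⟩ | ⟨_, h⟩ <;> obtain ⟨b, hb⟩ := hg _ h
    · exact ⟨b, getLast?_map_symbolMap hb⟩
    all_goals exact ⟨b, List.mem_getLast?_append_of_mem_getLast?
      (getLast?_map_symbolMap (getLast?_of_nonterminal_cons hb))⟩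
  · rcases h with ⟨h, hρ⟩ | ⟨_, h, -⟩ | ⟨_, h, -⟩ <;> obtain ⟨b, hb⟩ := hg _ h
    · exact ⟨b, hρ.getLast? (getLast?_of_nonterminal_cons hb)⟩
    all_goals exact ⟨b, List.mem_getLast?_append_of_mem_getLast?
      (getLast?_map_symbolMap (getLast?_of_nonterminal_cons hb))⟩

end Greibach

end ContextFreeGrammar

open ContextFreeGrammar ContextFreeRule in
/-- **Double Greibach normal form.**
For every context-free grammar `G` there exists a context-free grammar `G'` in which the
first and the last character of the right-hand side of every production are terminal
characters, such that `L(G') = L(G) \ {ε}`. -/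
theorem double_greibach_normal_form {T : Type} (G : ContextFreeGrammar.{0} T) :
    ∃ G' : ContextFreeGrammar.{0} T,
      (∀ r ∈ G'.rules,
          (∃ a : T, r.output.head? = some (Symbol.terminal a)) ∧
          (∃ b : T, r.output.getLast? = some (Symbol.terminal b))) ∧
      G'.language = G.language \ {([] : List T)} := by
  set K := G.toProper.toGreibach.reverse
  have hK : ∀ r ∈ K.rules, r.EndsWithTerminal := forall_mem_reverse_rules.2 fun _ hr =>
    endsWithTerminal_reverse.2 (startsWithTerminal_of_mem_toGreibach_rules hr)
  refine ⟨K.toGreibach.reverse, forall_mem_reverse_rules.2 fun r hr => ?_, ?_⟩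
  · exact ⟨startsWithTerminal_reverse.2 (endsWithTerminal_of_mem_toGreibach_rules hK hr),
      endsWithTerminal_reverse.2 (startsWithTerminal_of_mem_toGreibach_rules hr)⟩
  · rw [language_reverse, toGreibach_language fun r hr => (hK r hr).isProper, language_reverse,
      toGreibach_language isProper_toProper, Language.reverse_reverse, toProper_language]
end

section
/- Operator normal form: every context-free grammar can be transformed into an equivalent operator grammar, i.e., for every context-free grammar G there is a context-free grammar G' with L(G') = L(G) in which no production's right-hand side contains two adjacent nonterminal symbols. -/
/-!
Add a fresh start symbol `none` and, for every nonterminal `A` and terminal `t`, a nonterminal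
`(A, t)` that is to generate exactly the words `w` with `A ⇒* w t`. A rule `A → α` becomes
`(A, t) → γ` whenever `γ t` is obtained from `α` by replacing every nonterminal `B` either by a
block `(B, b) b` or, when `B` is nullable, by nothing. Each nonterminal of such an encoding is
followed by a terminal, so the new rules are in operator form. Encodings are preserved by
derivation steps in both directions: a step of the new grammar at `(A, t)` lifts to the original
rule at `A`, and conversely every step of the original grammar can be replayed on an encoding,
which gives equality of the languages.
-/

namespace ContextFreeRule

lemma rewrites_singleton_iff {T N : Type*} {r : ContextFreeRule T N} {X : N}
    {v : List (Symbol T N)} : r.Rewrites [.nonterminal X] v ↔ r.input = X ∧ v = r.output := by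
  refine ⟨fun h => ?_, fun ⟨hX, hv⟩ => hX ▸ hv ▸ .input_output⟩
  cases h with
  | head => simp
  | cons _ h => cases h

end ContextFreeRule

namespace ContextFreeGrammar

variable {T : Type*}

def Nullable (g : ContextFreeGrammar T) (B : g.NT) : Prop :=
  g.Derives [.nonterminal B] []

def terminals (g : ContextFreeGrammar T) : Set T :=
  {a | ∃ r ∈ g.rules, .terminal a ∈ r.output}

lemma finite_terminals (g : ContextFreeGrammar T) : g.terminals.Finite :=
  (g.rules.finite_toSet.biUnion fun r _ => r.output.finite_toSet.preimage
    (Function.Injective.injOn fun _ _ => Symbol.terminal.inj)).subset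
    fun _ ⟨_, hr, ha⟩ => Set.mem_biUnion hr ha

inductive Encodes (g : ContextFreeGrammar T) :
    List (Symbol T (Option (g.NT × T))) → List (Symbol T g.NT) → Prop
  | nil : Encodes g [] []
  | terminal {u v} (a : T) : Encodes g u v → Encodes g (.terminal a :: u) (.terminal a :: v)
  | block {u v} (B : g.NT) {b : T} (hb : b ∈ g.terminals) : Encodes g u v →
      Encodes g (.nonterminal (some (B, b)) :: .terminal b :: u) (.nonterminal B :: v)
  | nullable {u v} {B : g.NT} (hB : g.Nullable B) : Encodes g u v →
      Encodes g u (.nonterminal B :: v)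

namespace Encodes

variable {g : ContextFreeGrammar T} {u u₁ u₂ : List (Symbol T (Option (g.NT × T)))}
  {v v₁ v₂ : List (Symbol T g.NT)}

lemma append (h₁ : g.Encodes u₁ v₁) (h₂ : g.Encodes u₂ v₂) :
    g.Encodes (u₁ ++ u₂) (v₁ ++ v₂) := by
  induction h₁ with
  | nil => exact h₂
  | terminal a _ ih => exact .terminal a ih
  | block B hb _ ih => exact .block B hb ih
  | nullable hB _ ih => exact .nullable hB ih

lemma map_terminal (w : List T) : g.Encodes (w.map .terminal) (w.map .terminal) := by
  induction w with
  | nil => exact .nil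
  | cons a w ih => exact .terminal a ih

lemma exists_eq_append (h : g.Encodes u (v₁ ++ v₂)) :
    ∃ u₁ u₂, u = u₁ ++ u₂ ∧ g.Encodes u₁ v₁ ∧ g.Encodes u₂ v₂ := by
  induction v₁ generalizing u with
  | nil => exact ⟨[], u, rfl, .nil, h⟩
  | cons x v₁ ih =>
    cases h with
    | terminal a h =>
      obtain ⟨u₁, u₂, rfl, h₁, h₂⟩ := ih h
      exact ⟨_ :: u₁, u₂, rfl, .terminal a h₁, h₂⟩
    | block B hb h =>
      obtain ⟨u₁, u₂, rfl, h₁, h₂⟩ := ih h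
      exact ⟨_ :: _ :: u₁, u₂, rfl, .block B hb h₁, h₂⟩
    | nullable hB h =>
      obtain ⟨u₁, u₂, rfl, h₁, h₂⟩ := ih h
      exact ⟨u₁, u₂, rfl, .nullable hB h₁, h₂⟩

lemma exists_eq_append_nonterminal {p q : List (Symbol T (Option (g.NT × T)))}
    {X : Option (g.NT × T)} (h : g.Encodes (p ++ .nonterminal X :: q) v) :
    ∃ A s q' v₁ v₂, X = some (A, s) ∧ q = .terminal s :: q' ∧
      v = v₁ ++ .nonterminal A :: v₂ ∧ g.Encodes p v₁ ∧ g.Encodes q' v₂ := by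
  generalize hu : p ++ .nonterminal X :: q = u at h
  induction h generalizing p with
  | nil => simp at hu
  | terminal a h ih =>
    obtain _ | ⟨_, p⟩ := p
    · simp at hu
    · simp only [List.cons_append, List.cons.injEq] at hu
      obtain ⟨rfl, hu⟩ := hu
      obtain ⟨A, s, q', v₁, v₂, rfl, rfl, rfl, h₁, h₂⟩ := ih hu
      exact ⟨A, s, q', _ :: v₁, v₂, rfl, rfl, rfl, .terminal a h₁, h₂⟩
  | @block u v B b hb h ih =>
    obtain _ | ⟨_, _ | ⟨_, p⟩⟩ := p
    · simp only [List.nil_append, List.cons.injEq, Symbol.nonterminal.injEq] at hu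
      obtain ⟨rfl, rfl⟩ := hu
      exact ⟨B, b, u, [], v, rfl, rfl, rfl, .nil, h⟩
    · simp at hu
    · simp only [List.cons_append, List.cons.injEq] at hu
      obtain ⟨rfl, rfl, hu⟩ := hu
      obtain ⟨A, s, q', v₁, v₂, rfl, rfl, rfl, h₁, h₂⟩ := ih hu
      exact ⟨A, s, q', _ :: v₁, v₂, rfl, rfl, rfl, .block B hb h₁, h₂⟩
  | nullable hB h ih =>
    obtain ⟨A, s, q', v₁, v₂, rfl, rfl, rfl, h₁, h₂⟩ := ih hu
    exact ⟨A, s, q', _ :: v₁, v₂, rfl, rfl, rfl, .nullable hB h₁, h₂⟩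

lemma derives_map_terminal {w : List T} (h : g.Encodes (w.map .terminal) v) :
    g.Derives v (w.map .terminal) := by
  generalize hu : w.map Symbol.terminal = u at h
  induction h generalizing w with
  | nil => rw [List.map_eq_nil_iff.mp hu]; rfl
  | terminal a h ih =>
    obtain _ | ⟨_, w⟩ := w
    · simp at hu
    · simp only [List.map_cons, List.cons.injEq, Symbol.terminal.injEq] at hu
      obtain ⟨rfl, hu⟩ := hu
      exact (ih hu).append_left [_]
  | block B hb h ih => cases w <;> simp at hu
  | nullable hB h ih => exact (hB.append_right _).trans (ih hu)

lemma exists_eq_concat_terminal (h : g.Encodes u v)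
    (hv : ∀ a, .terminal a ∈ v → a ∈ g.terminals) (hu : u ≠ []) :
    ∃ γ, ∃ s ∈ g.terminals, u = γ ++ [.terminal s] := by
  induction h with
  | nil => exact absurd rfl hu
  | @terminal u v a h ih =>
    obtain rfl | hu := eq_or_ne u []
    · exact ⟨[], a, hv a (by simp), rfl⟩
    · obtain ⟨γ, s, hs, rfl⟩ := ih (fun b hb => hv b (by simp [hb])) hu
      exact ⟨_ :: γ, s, hs, rfl⟩
  | @block u v B b hb h ih =>
    obtain rfl | hu := eq_or_ne u []
    · exact ⟨[_], b, hb, rfl⟩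
    · obtain ⟨γ, s, hs, rfl⟩ := ih (fun b hb => hv b (by simp [hb])) hu
      exact ⟨_ :: _ :: γ, s, hs, rfl⟩
  | nullable hB h ih => exact ih (fun b hb => hv b (by simp [hb])) hu

lemma isChain (h : g.Encodes u v) :
    u.IsChain fun x y => ∀ A B, ¬(x = .nonterminal A ∧ y = .nonterminal B) := by
  induction h with
  | nil => exact List.isChain_nil
  | terminal a h ih => exact ih.cons fun _ _ _ _ ⟨hx, _⟩ => nomatch hx
  | block B hb h ih =>
    exact List.isChain_cons_cons.mpr
      ⟨(fun _ _ ⟨_, hy⟩ => nomatch hy), ih.cons fun _ _ _ _ ⟨hx, _⟩ => nomatch hx⟩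
  | nullable hB h ih => exact ih

end Encodes

lemma finite_setOf_encodes (g : ContextFreeGrammar T) (v : List (Symbol T g.NT)) :
    {u | g.Encodes u v}.Finite := by
  induction v with
  | nil => exact (Set.finite_singleton []).subset fun u (h : g.Encodes u []) => by cases h; rfl
  | cons x v ih =>
    cases x with
    | terminal a =>
      refine (ih.image (List.cons (.terminal a))).subset fun u h => ?_
      cases h with | terminal a h => exact ⟨_, h, rfl⟩
    | nonterminal B =>
      refine (ih.union ((finite_terminals g).biUnion fun b _ =>
        ih.image fun u => .nonterminal (some (B, b)) :: .terminal b :: u)).subset fun u h => ?_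
      cases h with
      | block B hb h => exact .inr (Set.mem_biUnion hb ⟨_, h, rfl⟩)
      | nullable hB h => exact .inl h

section OperatorGrammar

variable {T : Type} (g : ContextFreeGrammar T)

def operatorRules : Set (ContextFreeRule T (Option (g.NT × T))) :=
  (fun u => ⟨none, u⟩) '' {u | g.Encodes u [.nonterminal g.initial]} ∪
    ⋃ r ∈ g.rules, (fun p : List (Symbol T (Option (g.NT × T))) × T =>
      ⟨some (r.input, p.2), p.1⟩) ''
        ((fun p => p.1 ++ [.terminal p.2]) ⁻¹' {u | g.Encodes u r.output})

lemma finite_operatorRules : g.operatorRules.Finite :=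
  ((g.finite_setOf_encodes _).image _).union <| g.rules.finite_toSet.biUnion fun _ _ =>
    ((g.finite_setOf_encodes _).preimage <| Function.Injective.injOn fun _ _ h => by
      obtain ⟨h₁, h₂⟩ := List.append_inj' h (by simp)
      exact Prod.ext h₁ (Symbol.terminal.inj (List.singleton_inj.mp h₂))).image _

-- An `abbrev`, so that `g.operatorGrammar.NT` unfolds to `Option (g.NT × T)` under `simp`.
noncomputable abbrev operatorGrammar : ContextFreeGrammar T where
  NT := Option (g.NT × T)
  initial := none
  rules := g.finite_operatorRules.toFinset

variable {g}

lemma mem_operatorGrammar_rules {r' : ContextFreeRule T (Option (g.NT × T))} :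
    r' ∈ g.operatorGrammar.rules ↔
      (r'.input = none ∧ g.Encodes r'.output [.nonterminal g.initial]) ∨
      ∃ r ∈ g.rules, ∃ s, r'.input = some (r.input, s) ∧
        g.Encodes (r'.output ++ [.terminal s]) r.output := by
  change r' ∈ g.finite_operatorRules.toFinset ↔ _
  obtain ⟨X, γ⟩ := r'
  simp [operatorRules, eq_comm, and_comm]

lemma Encodes.exists_produces_of_produces {u u' : List (Symbol T (Option (g.NT × T)))}
    {v : List (Symbol T g.NT)} (h : g.Encodes u v) (hu : g.operatorGrammar.Produces u u') :
    ∃ v', g.Encodes u' v' ∧ g.Produces v v' := by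
  obtain ⟨r', hr', hrw⟩ := hu
  obtain ⟨p, q, rfl, rfl⟩ := hrw.exists_parts
  rw [List.append_assoc, List.singleton_append] at h
  obtain ⟨A, s, q', v₁, v₂, hX, rfl, rfl, h₁, h₂⟩ := h.exists_eq_append_nonterminal
  rcases mem_operatorGrammar_rules.mp hr' with ⟨hnone, -⟩ | ⟨r, hr, s', hin, henc⟩
  · simp [hnone] at hX
  · obtain ⟨rfl, rfl⟩ := Prod.ext_iff.mp (Option.some.inj (hin.symm.trans hX))
    refine ⟨v₁ ++ r.output ++ v₂, by simpa using (h₁.append henc).append h₂, r, hr, ?_⟩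
    simpa using ContextFreeRule.rewrites_of_exists_parts r v₁ v₂

lemma Encodes.exists_derives_of_produces {v v' : List (Symbol T g.NT)}
    {u' : List (Symbol T (Option (g.NT × T)))} (hv : g.Produces v v') (h : g.Encodes u' v') :
    ∃ u, g.Encodes u v ∧ g.operatorGrammar.Derives u u' := by
  obtain ⟨r, hr, hrw⟩ := hv
  obtain ⟨p, q, rfl, rfl⟩ := hrw.exists_parts
  obtain ⟨u₁, u₂, rfl, h₁, h₂⟩ := h.exists_eq_append
  obtain ⟨u₁, uα, rfl, hp, hα⟩ := h₁.exists_eq_append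
  obtain rfl | hne := eq_or_ne uα []
  · have hA : g.Nullable r.input :=
      (Produces.single ⟨r, hr, .input_output⟩).trans (hα.derives_map_terminal (w := []))
    exact ⟨u₁ ++ u₂, by simpa using hp.append (.nullable hA h₂), by rw [List.append_nil]⟩
  · obtain ⟨γ, s, hs, rfl⟩ := hα.exists_eq_concat_terminal (fun a ha => ⟨r, hr, ha⟩) hne
    have hrule : (⟨some (r.input, s), γ⟩ : ContextFreeRule T (Option (g.NT × T))) ∈
        g.operatorGrammar.rules :=
      mem_operatorGrammar_rules.mpr (.inr ⟨r, hr, s, rfl, hα⟩)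
    refine ⟨u₁ ++ .nonterminal (some (r.input, s)) :: .terminal s :: u₂,
      by simpa using hp.append (.block r.input hs h₂), Produces.single ⟨_, hrule, ?_⟩⟩
    simpa using ContextFreeRule.rewrites_of_exists_parts _ u₁ (.terminal s :: u₂)

lemma Encodes.derives_of_operatorGrammar_derives {u : List (Symbol T (Option (g.NT × T)))}
    {v : List (Symbol T g.NT)} {w : List T} (h : g.Encodes u v)
    (hu : g.operatorGrammar.Derives u (w.map .terminal)) : g.Derives v (w.map .terminal) := by
  induction hu using Relation.ReflTransGen.head_induction_on generalizing v with
  | refl => exact h.derives_map_terminal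
  | head hp _ ih =>
    obtain ⟨v', h', hv⟩ := h.exists_produces_of_produces hp
    exact hv.trans_derives (ih h')

lemma exists_encodes_of_derives {v : List (Symbol T g.NT)} {w : List T}
    (hv : g.Derives v (w.map .terminal)) :
    ∃ u, g.Encodes u v ∧ g.operatorGrammar.Derives u (w.map .terminal) := by
  induction hv using Relation.ReflTransGen.head_induction_on with
  | refl => exact ⟨_, .map_terminal w, .refl _⟩
  | head hp _ ih =>
    obtain ⟨u', h', hu'⟩ := ih
    obtain ⟨u, h, hu⟩ := h'.exists_derives_of_produces hp
    exact ⟨u, h, hu.trans hu'⟩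

lemma operatorGrammar_derives_initial_iff {w : List T} :
    g.operatorGrammar.Derives [.nonterminal none] (w.map .terminal) ↔
      ∃ u, g.Encodes u [.nonterminal g.initial] ∧
        g.operatorGrammar.Derives u (w.map .terminal) := by
  constructor
  · intro h
    obtain h | ⟨u, ⟨r', hr', hrw⟩, hu⟩ := h.eq_or_head
    · cases w <;> simp at h
    obtain ⟨hin, rfl⟩ := ContextFreeRule.rewrites_singleton_iff.mp hrw
    rcases mem_operatorGrammar_rules.mp hr' with ⟨-, henc⟩ | ⟨r, -, s, hsome, -⟩
    · exact ⟨_, henc, hu⟩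
    · simp [hin] at hsome
  · rintro ⟨u, h, hu⟩
    have hrule : (⟨none, u⟩ : ContextFreeRule T (Option (g.NT × T))) ∈
        g.operatorGrammar.rules :=
      mem_operatorGrammar_rules.mpr (.inl ⟨rfl, h⟩)
    exact Produces.trans_derives ⟨_, hrule, .input_output⟩ hu

variable (g)

theorem operatorGrammar_language : g.operatorGrammar.language = g.language := by
  ext w
  rw [mem_language_iff, mem_language_iff, operatorGrammar_derives_initial_iff]
  exact ⟨fun ⟨_, h, hu⟩ => h.derives_of_operatorGrammar_derives hu,
    exists_encodes_of_derives⟩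

theorem operatorGrammar_rules_isChain : ∀ r ∈ g.operatorGrammar.rules,
    r.output.IsChain fun x y => ∀ A B, ¬(x = .nonterminal A ∧ y = .nonterminal B) := by
  intro r hr
  rcases mem_operatorGrammar_rules.mp hr with ⟨-, h⟩ | ⟨r, -, s, -, h⟩
  · exact h.isChain
  · exact h.isChain.left_of_append

end OperatorGrammar

end ContextFreeGrammar

/-- **Operator normal form.**
Every context-free grammar can be transformed into an equivalent operator grammar:
for every context-free grammar `G` there is a context-free grammar `G'` with
`L(G') = L(G)` in which no production's right-hand side contains two adjacent
nonterminal symbols. -/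
theorem operator_normal_form {T : Type} (G : ContextFreeGrammar.{0} T) :
    ∃ G' : ContextFreeGrammar.{0} T,
      (∀ r ∈ G'.rules,
        List.Chain'
          (fun s t => ∀ A B : G'.NT,
            ¬ (s = Symbol.nonterminal A ∧ t = Symbol.nonterminal B))
          r.output) ∧
      G'.language = G.language :=
  ⟨G.operatorGrammar, G.operatorGrammar_rules_isChain, G.operatorGrammar_language⟩
end

section
/- Fischer normal form for operator precedence grammars: for every operator precedence grammar G there exists an operator precedence grammar G' with L(G') = L(G) that is in Fischer normal form, i.e., G' is invertible (no two productions of G' have the same right-hand side), G' has no empty rules (rules with right-hand side ε) except possibly S → ε, and no renaming rules (rules whose right-hand side is a single nonterminal) except possibly rules whose left-hand side is the axiom S. -/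
namespace OP

variable {T : Type}

/-- An *operator grammar* (OG): no production's right-hand side contains
two adjacent nonterminal symbols. -/
def IsOperatorGrammar (G : ContextFreeGrammar.{0} T) : Prop :=
  ∀ r ∈ G.rules,
    List.Chain'
      (fun s t => ∀ A B : G.NT,
        ¬ (s = Symbol.nonterminal A ∧ t = Symbol.nonterminal B))
      r.output

/-- The *left terminal set* `L_G(A) = {a ∈ Σ | A ⇒* B a α, B ∈ V_N ∪ {ε}}`. -/
def leftTerminals (G : ContextFreeGrammar.{0} T) (A : G.NT) : Set T :=
  {a | ∃ α : List (Symbol T G.NT),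
      G.Derives [Symbol.nonterminal A] (Symbol.terminal a :: α) ∨
      ∃ B : G.NT,
        G.Derives [Symbol.nonterminal A] (Symbol.nonterminal B :: Symbol.terminal a :: α)}

/-- The *right terminal set* `R_G(A) = {a ∈ Σ | A ⇒* α a B, B ∈ V_N ∪ {ε}}`. -/
def rightTerminals (G : ContextFreeGrammar.{0} T) (A : G.NT) : Set T :=
  {a | ∃ α : List (Symbol T G.NT),
      G.Derives [Symbol.nonterminal A] (α ++ [Symbol.terminal a]) ∨
      ∃ B : G.NT,
        G.Derives [Symbol.nonterminal A] (α ++ [Symbol.terminal a, Symbol.nonterminal B])}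

/-- `a ≐ b` (*equal in precedence*): some right-hand side contains `a B b`
with `B ∈ V_N ∪ {ε}`. -/
def EqPrec (G : ContextFreeGrammar.{0} T) (a b : T) : Prop :=
  ∃ r ∈ G.rules, ∃ u v : List (Symbol T G.NT),
    r.output = u ++ [Symbol.terminal a, Symbol.terminal b] ++ v ∨
    ∃ B : G.NT,
      r.output = u ++ [Symbol.terminal a, Symbol.nonterminal B, Symbol.terminal b] ++ v

/-- `a ⋗ b` (*takes precedence*): some right-hand side contains `D b` with `D ∈ V_N`
and `a ∈ R_G(D)`. -/
def TakesPrec (G : ContextFreeGrammar.{0} T) (a b : T) : Prop :=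
  ∃ r ∈ G.rules, ∃ (u v : List (Symbol T G.NT)) (D : G.NT),
    r.output = u ++ [Symbol.nonterminal D, Symbol.terminal b] ++ v ∧
    a ∈ rightTerminals G D

/-- `a ⋖ b` (*yields precedence*): some right-hand side contains `a D` with `D ∈ V_N`
and `b ∈ L_G(D)`. -/
def YieldsPrec (G : ContextFreeGrammar.{0} T) (a b : T) : Prop :=
  ∃ r ∈ G.rules, ∃ (u v : List (Symbol T G.NT)) (D : G.NT),
    r.output = u ++ [Symbol.terminal a, Symbol.nonterminal D] ++ v ∧
    b ∈ leftTerminals G D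

/-- The three operator precedence relations. -/
inductive Prec : Type
  | yields : Prec
  | eq : Prec
  | takes : Prec

/-- The *operator precedence matrix* `OPM(G)`: for each ordered pair `(a, b)` of
terminals, the set of precedence relations holding between `a` and `b`. -/
def opm (G : ContextFreeGrammar.{0} T) (a b : T) : Set Prec :=
  {p | (p = Prec.yields ∧ YieldsPrec G a b) ∨
       (p = Prec.eq ∧ EqPrec G a b) ∨
       (p = Prec.takes ∧ TakesPrec G a b)}

/-- A precedence matrix is *conflict-free* iff each entry contains at most one relation. -/
def ConflictFree (M : T → T → Set Prec) : Prop :=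
  ∀ a b, (M a b).Subsingleton

/-- An *operator precedence grammar* (OPG): an operator grammar whose operator
precedence matrix is conflict-free. -/
def IsOPG (G : ContextFreeGrammar.{0} T) : Prop :=
  IsOperatorGrammar G ∧ ConflictFree (opm G)

end OP

/-!
Erasing nullable nonterminals and absorbing renamings `A ⇒* B` into the rules of `G` gives an
ε-free, renaming-free grammar for `L(G) \ {ε}`. Its nonterminals are then replaced by sets of
nonterminals: a right-hand side `δ` over sets gets the single left-hand side "all `A` having a rule
`A → γ` with `γ` lifting to `δ`", which makes the grammar invertible; a fresh axiom rewrites to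
every set containing `S`, and to `ε` when `ε ∈ L(G)`.

Every right-hand side of the result arises from one of `G` by deleting nonterminals and replacing
the others by nonterminals with smaller left and right terminal sets. In an operator grammar at
most one nonterminal separates two terminals of a right-hand side, so no precedence relation is
created and the precedence matrix stays conflict-free.
-/

namespace List

theorem forall₂_append_right_iff {α β : Type*} {R : α → β → Prop} {l : List α}
    {u v : List β} :
    Forall₂ R l (u ++ v) ↔ ∃ l₁ l₂, l = l₁ ++ l₂ ∧ Forall₂ R l₁ u ∧ Forall₂ R l₂ v := by
  refine ⟨fun h => ⟨_, _, (take_append_drop u.length l).symm,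
    forall₂_take_append l u v h, forall₂_drop_append l u v h⟩, ?_⟩
  rintro ⟨l₁, l₂, rfl, h₁, h₂⟩
  exact rel_append h₁ h₂

theorem Forall₂.exists_middle {α β γ : Type*} {R : α → γ → Prop} {S : α → β → Prop}
    {S' : β → γ → Prop} (H : ∀ a c, R a c → ∃ b, S a b ∧ S' b c) {l₁ : List α} {l₃ : List γ}
    (h : Forall₂ R l₁ l₃) : ∃ l₂, Forall₂ S l₁ l₂ ∧ Forall₂ S' l₂ l₃ := by
  induction h with
  | nil => exact ⟨[], .nil, .nil⟩
  | cons hac _ ih =>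
    obtain ⟨b, hab, hbc⟩ := H _ _ hac
    obtain ⟨l₂, h₁, h₂⟩ := ih
    exact ⟨b :: l₂, .cons hab h₁, .cons hbc h₂⟩

theorem finite_setOf_forall₂ {α β : Type*} {R : α → β → Prop} (hR : ∀ a, {b | R a b}.Finite)
    (l : List α) : {l' | Forall₂ R l l'}.Finite := by
  induction l with
  | nil => exact (Set.finite_singleton []).subset fun l' h => forall₂_nil_left_iff.mp h
  | cons a l ih =>
    refine (((hR a).prod ih).image fun p => p.1 :: p.2).subset ?_
    intro l' h
    obtain ⟨b, l'', hab, hl'', rfl⟩ := forall₂_cons_left_iff.mp h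
    exact ⟨(b, l''), ⟨hab, hl''⟩, rfl⟩

end List

namespace ContextFreeGrammar

variable {T : Type*} {g : ContextFreeGrammar T}

theorem produces_nonterminal_iff {A : g.NT} {v : List (Symbol T g.NT)} :
    g.Produces [.nonterminal A] v ↔ ⟨A, v⟩ ∈ g.rules := by
  refine ⟨fun ⟨⟨B, out⟩, hr, hrw⟩ => ?_, fun h => ⟨_, h, ContextFreeRule.Rewrites.input_output⟩⟩
  obtain ⟨p, q, hpq, rfl⟩ := hrw.exists_parts
  obtain ⟨rfl, rfl, rfl⟩ : p = [] ∧ B = A ∧ q = [] := by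
    cases p <;> simp_all
  simpa using hr

theorem not_produces_map_terminal (w : List T) (v : List (Symbol T g.NT)) :
    ¬ g.Produces (w.map Symbol.terminal) v := fun h => by
  obtain ⟨r, -, hr⟩ := h.exists_nonterminal_input_mem
  simp at hr

theorem Derives.eq_of_map_terminal {w : List T} {v : List (Symbol T g.NT)}
    (h : g.Derives (w.map Symbol.terminal) v) : v = w.map Symbol.terminal := by
  rcases h.eq_or_head with h | ⟨_, hp, -⟩
  · exact h.symm
  · exact absurd hp (not_produces_map_terminal w _)

theorem Produces.append_cases {p q v : List (Symbol T g.NT)} (h : g.Produces (p ++ q) v) :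
    (∃ p', g.Produces p p' ∧ v = p' ++ q) ∨ (∃ q', g.Produces q q' ∧ v = p ++ q') := by
  obtain ⟨r, hr, hrw⟩ := h
  obtain ⟨s, t, hst, rfl⟩ := hrw.exists_parts
  rw [List.append_assoc, List.singleton_append] at hst
  rcases List.append_eq_append_iff.mp hst with ⟨a, rfl, rfl⟩ | ⟨c, rfl, hc⟩
  · exact .inr ⟨a ++ r.output ++ t, ⟨r, hr, by simpa using r.rewrites_of_exists_parts a t⟩, by simp⟩
  · obtain ⟨rfl, rfl⟩ | ⟨c', rfl, rfl⟩ := List.cons_eq_append_iff.mp hc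
    · exact .inr ⟨r.output ++ t, ⟨r, hr, by simpa using r.rewrites_of_exists_parts [] t⟩,
        by simp⟩
    · exact .inl ⟨s ++ r.output ++ c', ⟨r, hr, by simpa using r.rewrites_of_exists_parts s c'⟩,
        by simp⟩

theorem derives_flatten_of_forall₂ {l : List (Symbol T g.NT)} {ws : List (List T)}
    (h : List.Forall₂ (fun s w => g.Derives [s] (w.map Symbol.terminal)) l ws) :
    g.Derives l (ws.flatten.map Symbol.terminal) := by
  induction h with
  | nil => exact Derives.refl _
  | @cons s w l ws hs _ ih =>
    rw [List.flatten_cons, List.map_append]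
    exact (hs.append_right l).trans (ih.append_left _)

theorem Derives.exists_mem_rules {A : g.NT} {w : List T}
    (h : g.Derives [.nonterminal A] (w.map Symbol.terminal)) :
    ∃ γ, ⟨A, γ⟩ ∈ g.rules ∧ g.Derives γ (w.map Symbol.terminal) := by
  rcases h.eq_or_head with h | ⟨γ, hp, hd⟩
  · cases w <;> simp at h
  · exact ⟨γ, produces_nonterminal_iff.mp hp, hd⟩

inductive DerivesIn (g : ContextFreeGrammar T) :
    List (Symbol T g.NT) → List (Symbol T g.NT) → ℕ → Prop
  | refl (u : List (Symbol T g.NT)) : g.DerivesIn u u 0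
  | head {u v w : List (Symbol T g.NT)} {n : ℕ} :
      g.Produces u v → g.DerivesIn v w n → g.DerivesIn u w (n + 1)

theorem DerivesIn.derives {u v : List (Symbol T g.NT)} {n : ℕ} (h : g.DerivesIn u v n) :
    g.Derives u v := by
  induction h with
  | refl => exact Derives.refl _
  | head hp _ ih => exact hp.trans_derives ih

theorem derives_iff_exists_derivesIn {u v : List (Symbol T g.NT)} :
    g.Derives u v ↔ ∃ n, g.DerivesIn u v n := by
  refine ⟨fun h => ?_, fun ⟨_, h⟩ => h.derives⟩
  induction h using Relation.ReflTransGen.head_induction_on with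
  | refl => exact ⟨0, .refl _⟩
  | head hp _ ih => exact ih.elim fun n hn => ⟨n + 1, .head hp hn⟩

theorem DerivesIn.append_split {p q w : List (Symbol T g.NT)} {n : ℕ}
    (h : g.DerivesIn (p ++ q) w n) :
    ∃ w₁ w₂ n₁ n₂, w = w₁ ++ w₂ ∧ n₁ + n₂ = n ∧ g.DerivesIn p w₁ n₁ ∧ g.DerivesIn q w₂ n₂ := by
  induction n generalizing p q with
  | zero =>
    cases h
    exact ⟨p, q, 0, 0, rfl, rfl, .refl _, .refl _⟩
  | succ n ih =>
    obtain _ | ⟨hp, hd⟩ := h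
    rcases hp.append_cases with ⟨p', hp', rfl⟩ | ⟨q', hq', rfl⟩
    · obtain ⟨w₁, w₂, n₁, n₂, rfl, rfl, h₁, h₂⟩ := ih hd
      exact ⟨w₁, w₂, n₁ + 1, n₂, rfl, by omega, .head hp' h₁, h₂⟩
    · obtain ⟨w₁, w₂, n₁, n₂, rfl, rfl, h₁, h₂⟩ := ih hd
      exact ⟨w₁, w₂, n₁, n₂ + 1, rfl, by omega, h₁, .head hq' h₂⟩

theorem DerivesIn.exists_mem_rules {A : g.NT} {w : List T} {n : ℕ}
    (h : g.DerivesIn [.nonterminal A] (w.map Symbol.terminal) n) :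
    ∃ γ m, n = m + 1 ∧ ⟨A, γ⟩ ∈ g.rules ∧ g.DerivesIn γ (w.map Symbol.terminal) m := by
  generalize hv : w.map Symbol.terminal = v at h
  cases h with
  | refl => cases w <;> simp at hv
  | head hp hd => exact ⟨_, _, rfl, produces_nonterminal_iff.mp hp, hv ▸ hd⟩

theorem DerivesIn.exists_pieces {γ : List (Symbol T g.NT)} {w : List T} {n : ℕ}
    (h : g.DerivesIn γ (w.map Symbol.terminal) n) :
    ∃ ws : List (List T), w = ws.flatten ∧
      List.Forall₂ (fun s wi => ∃ k ≤ n, g.DerivesIn [s] (wi.map Symbol.terminal) k) γ ws := by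
  induction γ generalizing w n with
  | nil =>
    have := (Derives.eq_of_map_terminal (w := []) h.derives).symm
    exact ⟨[], by simpa using this, .nil⟩
  | cons s γ ih =>
    obtain ⟨t₁, t₂, n₁, n₂, ht, rfl, h₁, h₂⟩ :=
      (show g.DerivesIn ([s] ++ γ) _ n from h).append_split
    obtain ⟨w₁, w₂, rfl, rfl, rfl⟩ := List.map_eq_append_iff.mp ht
    obtain ⟨ws, rfl, hws⟩ := ih h₂
    exact ⟨w₁ :: ws, rfl, .cons ⟨n₁, by omega, h₁⟩
      (hws.imp fun _ _ ⟨k, hk, hd⟩ => ⟨k, by omega, hd⟩)⟩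

end ContextFreeGrammar

namespace OP

open ContextFreeGrammar

variable {T : Type}

section OperatorGrammar

variable {G : ContextFreeGrammar.{0} T}

theorem IsOperatorGrammar.output_ne (hG : IsOperatorGrammar G) {r : ContextFreeRule T G.NT}
    (hr : r ∈ G.rules) (p q : List (Symbol T G.NT)) (A B : G.NT) :
    r.output ≠ p ++ .nonterminal A :: .nonterminal B :: q := fun h => by
  have hchain : List.IsChain _ r.output := hG r hr
  rw [h] at hchain
  exact List.isChain_iff_forall_rel_of_append_cons_cons.mp hchain rfl A B ⟨rfl, rfl⟩

theorem IsOperatorGrammar.gap_eq_nil_left (hG : IsOperatorGrammar G)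
    {r : ContextFreeRule T G.NT} (hr : r ∈ G.rules) {p q : List (Symbol T G.NT)} {A : G.NT}
    {ds : List G.NT} {y : Symbol T G.NT}
    (hout : r.output = p ++ .nonterminal A :: (ds.map .nonterminal ++ y :: q)) : ds = [] := by
  rcases ds with _ | ⟨E, ds⟩
  · rfl
  · exact (hG.output_ne hr p (ds.map .nonterminal ++ y :: q) A E (by simp [hout])).elim

theorem IsOperatorGrammar.gap_eq_nil_right (hG : IsOperatorGrammar G)
    {r : ContextFreeRule T G.NT} (hr : r ∈ G.rules) {p q : List (Symbol T G.NT)} {B : G.NT}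
    {ds : List G.NT} {x : Symbol T G.NT}
    (hout : r.output = p ++ x :: (ds.map .nonterminal ++ .nonterminal B :: q)) : ds = [] := by
  rcases ds.eq_nil_or_concat with rfl | ⟨ds, E, rfl⟩
  · rfl
  · exact (hG.output_ne hr (p ++ x :: ds.map .nonterminal) q E B (by simp [hout])).elim

theorem IsOperatorGrammar.gap_eq_nil_or_singleton (hG : IsOperatorGrammar G)
    {r : ContextFreeRule T G.NT} (hr : r ∈ G.rules) {p q : List (Symbol T G.NT)}
    {ds : List G.NT} {x y : Symbol T G.NT}
    (hout : r.output = p ++ x :: (ds.map .nonterminal ++ y :: q)) : ds = [] ∨ ∃ E, ds = [E] := by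
  rcases ds with _ | ⟨E, _ | ⟨E', ds⟩⟩
  · exact .inl rfl
  · exact .inr ⟨E, rfl⟩
  · exact (hG.output_ne hr (p ++ [x]) (ds.map .nonterminal ++ y :: q) E E'
      (by simp [hout])).elim

end OperatorGrammar

section Contraction

variable {G' G : ContextFreeGrammar.{0} T}

def RefinesSymbol (G' G : ContextFreeGrammar.{0} T) : Symbol T G'.NT → Symbol T G.NT → Prop
  | .terminal a, .terminal b => a = b
  | .nonterminal D', .nonterminal D =>
      leftTerminals G' D' ⊆ leftTerminals G D ∧ rightTerminals G' D' ⊆ rightTerminals G D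
  | _, _ => False

theorem refinesSymbol_terminal_left {a : T} {x : Symbol T G.NT} :
    RefinesSymbol G' G (.terminal a) x ↔ x = .terminal a := by
  cases x <;> simp [RefinesSymbol, eq_comm]

theorem refinesSymbol_nonterminal_left {D' : G'.NT} {x : Symbol T G.NT} :
    RefinesSymbol G' G (.nonterminal D') x ↔ ∃ D, x = .nonterminal D ∧
      leftTerminals G' D' ⊆ leftTerminals G D ∧ rightTerminals G' D' ⊆ rightTerminals G D := by
  cases x <;> simp [RefinesSymbol]

inductive Contracts (G' G : ContextFreeGrammar.{0} T) :
    List (Symbol T G'.NT) → List (Symbol T G.NT) → Prop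
  | nil : Contracts G' G [] []
  | cons {x' : Symbol T G'.NT} {x : Symbol T G.NT} {δ γ} :
      RefinesSymbol G' G x' x → Contracts G' G δ γ → Contracts G' G (x' :: δ) (x :: γ)
  | drop (D : G.NT) {δ γ} : Contracts G' G δ γ → Contracts G' G δ (.nonterminal D :: γ)

theorem Contracts.append_split {u v : List (Symbol T G'.NT)} {γ : List (Symbol T G.NT)}
    (h : Contracts G' G (u ++ v) γ) :
    ∃ γ₁ γ₂, γ = γ₁ ++ γ₂ ∧ Contracts G' G u γ₁ ∧ Contracts G' G v γ₂ := by
  generalize hδ : u ++ v = δ at h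
  induction h generalizing u with
  | nil =>
    obtain ⟨rfl, rfl⟩ := List.append_eq_nil_iff.mp hδ
    exact ⟨[], [], rfl, .nil, .nil⟩
  | cons hx h ih =>
    rcases u with _ | ⟨z, u⟩
    · rw [List.nil_append] at hδ
      subst hδ
      exact ⟨[], _, rfl, .nil, .cons hx h⟩
    · obtain ⟨rfl, huv⟩ := List.cons.inj hδ
      obtain ⟨γ₁, γ₂, rfl, h₁, h₂⟩ := ih huv
      exact ⟨_ :: γ₁, γ₂, rfl, .cons hx h₁, h₂⟩
  | drop D _ ih =>
    obtain ⟨γ₁, γ₂, rfl, h₁, h₂⟩ := ih hδ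
    exact ⟨_ :: γ₁, γ₂, rfl, .drop D h₁, h₂⟩

theorem Contracts.cons_split {x' : Symbol T G'.NT} {v : List (Symbol T G'.NT)}
    {γ : List (Symbol T G.NT)} (h : Contracts G' G (x' :: v) γ) :
    ∃ ds x γ', γ = List.map Symbol.nonterminal ds ++ x :: γ' ∧ RefinesSymbol G' G x' x ∧
      Contracts G' G v γ' := by
  generalize hδ : x' :: v = δ at h
  induction h with
  | nil => cases hδ
  | cons hx h _ =>
    obtain ⟨rfl, rfl⟩ := List.cons.inj hδ
    exact ⟨[], _, _, rfl, hx, h⟩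
  | drop D _ ih =>
    obtain ⟨ds, x, γ', rfl, hx, h'⟩ := ih hδ
    exact ⟨D :: ds, x, γ', rfl, hx, h'⟩

theorem Contracts.pair_split {u v : List (Symbol T G'.NT)} {x' y' : Symbol T G'.NT}
    {γ : List (Symbol T G.NT)} (h : Contracts G' G (u ++ x' :: y' :: v) γ) :
    ∃ p ds x y q, γ = p ++ x :: (List.map Symbol.nonterminal ds ++ y :: q) ∧
      RefinesSymbol G' G x' x ∧ RefinesSymbol G' G y' y ∧ Contracts G' G v q := by
  obtain ⟨γ₁, γ₂, rfl, -, h₂⟩ := h.append_split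
  obtain ⟨ds₁, x, γ₃, rfl, hx, h₃⟩ := h₂.cons_split
  obtain ⟨ds, y, q, rfl, hy, hq⟩ := h₃.cons_split
  exact ⟨γ₁ ++ ds₁.map .nonterminal, ds, x, y, q, by simp, hx, hy, hq⟩

/-- Right-hand sides with fewer than two symbols carry no precedence relation. -/
def RulesContract (G' G : ContextFreeGrammar.{0} T) : Prop :=
  ∀ r' ∈ G'.rules, 2 ≤ r'.output.length → ∃ r ∈ G.rules, Contracts G' G r'.output r.output

theorem RulesContract.exists_pair (hc : RulesContract G' G) {r' : ContextFreeRule T G'.NT}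
    (hr' : r' ∈ G'.rules) {u v : List (Symbol T G'.NT)} {x' y' : Symbol T G'.NT}
    (hout : r'.output = u ++ x' :: y' :: v) :
    ∃ r ∈ G.rules, ∃ p ds x y q, r.output = p ++ x :: (List.map Symbol.nonterminal ds ++ y :: q) ∧
      RefinesSymbol G' G x' x ∧ RefinesSymbol G' G y' y ∧ Contracts G' G v q := by
  obtain ⟨r, hr, h⟩ := hc r' hr' (by simp [hout]; omega)
  exact ⟨r, hr, (hout ▸ h).pair_split⟩

theorem IsOperatorGrammar.of_rulesContract (hG : IsOperatorGrammar G)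
    (hc : RulesContract G' G) : IsOperatorGrammar G' := by
  intro r' hr'
  refine List.isChain_iff_forall_rel_of_append_cons_cons.mpr fun x' y' u v hout A B hAB => ?_
  obtain ⟨rfl, rfl⟩ := hAB
  obtain ⟨r, hr, p, ds, x, y, q, hout', hx, hy, -⟩ := hc.exists_pair hr' hout
  obtain ⟨C, rfl, -⟩ := refinesSymbol_nonterminal_left.mp hx
  obtain ⟨D, rfl, -⟩ := refinesSymbol_nonterminal_left.mp hy
  obtain rfl := hG.gap_eq_nil_left hr hout'
  exact hG.output_ne hr p q C D (by simpa using hout')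

theorem EqPrec.of_rulesContract (hG : IsOperatorGrammar G) (hc : RulesContract G' G) {a b : T}
    (h : EqPrec G' a b) : EqPrec G a b := by
  obtain ⟨r', hr', u, v, hout | ⟨B', hout⟩⟩ := h
  · obtain ⟨r, hr, p, ds, x, y, q, hout', hx, hy, -⟩ := hc.exists_pair hr' (by simpa using hout)
    obtain rfl := refinesSymbol_terminal_left.mp hx
    obtain rfl := refinesSymbol_terminal_left.mp hy
    rcases hG.gap_eq_nil_or_singleton hr hout' with rfl | ⟨E, rfl⟩
    · exact ⟨r, hr, p, q, .inl (by simp [hout'])⟩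
    · exact ⟨r, hr, p, q, .inr ⟨E, by simp [hout']⟩⟩
  · obtain ⟨r, hr, p, ds, x, y, q, hout', hx, hy, hq⟩ :=
      hc.exists_pair hr' (v := .terminal b :: v) (by simpa using hout)
    obtain rfl := refinesSymbol_terminal_left.mp hx
    obtain ⟨D, rfl, -⟩ := refinesSymbol_nonterminal_left.mp hy
    obtain rfl := hG.gap_eq_nil_right hr hout'
    obtain ⟨ds', z, q', rfl, hz, -⟩ := hq.cons_split
    obtain rfl := refinesSymbol_terminal_left.mp hz
    obtain rfl := hG.gap_eq_nil_left hr (p := p ++ [.terminal a]) (by simpa using hout')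
    exact ⟨r, hr, p, q', .inr ⟨D, by simp [hout']⟩⟩

theorem TakesPrec.of_rulesContract (hG : IsOperatorGrammar G) (hc : RulesContract G' G)
    {a b : T} (h : TakesPrec G' a b) : TakesPrec G a b := by
  obtain ⟨r', hr', u, v, D', hout, ha⟩ := h
  obtain ⟨r, hr, p, ds, x, y, q, hout', hx, hy, -⟩ := hc.exists_pair hr' (by simpa using hout)
  obtain ⟨D, rfl, -, hR⟩ := refinesSymbol_nonterminal_left.mp hx
  obtain rfl := refinesSymbol_terminal_left.mp hy
  obtain rfl := hG.gap_eq_nil_left hr hout'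
  exact ⟨r, hr, p, q, D, by simp [hout'], hR ha⟩

theorem YieldsPrec.of_rulesContract (hG : IsOperatorGrammar G) (hc : RulesContract G' G)
    {a b : T} (h : YieldsPrec G' a b) : YieldsPrec G a b := by
  obtain ⟨r', hr', u, v, D', hout, hb⟩ := h
  obtain ⟨r, hr, p, ds, x, y, q, hout', hx, hy, -⟩ := hc.exists_pair hr' (by simpa using hout)
  obtain rfl := refinesSymbol_terminal_left.mp hx
  obtain ⟨D, rfl, hL, -⟩ := refinesSymbol_nonterminal_left.mp hy
  obtain rfl := hG.gap_eq_nil_right hr hout'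
  exact ⟨r, hr, p, q, D, by simp [hout'], hL hb⟩

theorem opm_subset_of_rulesContract (hG : IsOperatorGrammar G) (hc : RulesContract G' G)
    (a b : T) : opm G' a b ⊆ opm G a b := by
  rintro p (⟨rfl, h⟩ | ⟨rfl, h⟩ | ⟨rfl, h⟩)
  · exact .inl ⟨rfl, h.of_rulesContract hG hc⟩
  · exact .inr (.inl ⟨rfl, h.of_rulesContract hG hc⟩)
  · exact .inr (.inr ⟨rfl, h.of_rulesContract hG hc⟩)

theorem IsOPG.of_rulesContract (hG : IsOPG G) (hc : RulesContract G' G) : IsOPG G' :=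
  ⟨hG.1.of_rulesContract hc, fun a b => (hG.2 a b).anti (opm_subset_of_rulesContract hG.1 hc a b)⟩

end Contraction

section ProperGrammar

variable (G : ContextFreeGrammar.{0} T)

def Nullable (B : G.NT) : Prop := G.Derives [.nonterminal B] []

inductive DropsNullable : List (Symbol T G.NT) → List (Symbol T G.NT) → Prop
  | nil : DropsNullable [] []
  | keep (s : Symbol T G.NT) {γ β} : DropsNullable γ β → DropsNullable (s :: γ) (s :: β)
  | drop {B : G.NT} {γ β} :
      Nullable G B → DropsNullable γ β → DropsNullable (.nonterminal B :: γ) β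

variable {G} in
theorem DropsNullable.sublist {γ β : List (Symbol T G.NT)} (h : DropsNullable G γ β) :
    β.Sublist γ := by
  induction h with
  | nil => exact .slnil
  | keep s _ ih => exact ih.cons_cons s
  | drop _ _ ih => exact ih.cons _

variable {G} in
theorem DropsNullable.derives {γ β : List (Symbol T G.NT)} (h : DropsNullable G γ β) :
    G.Derives γ β := by
  induction h with
  | nil => exact Derives.refl _
  | keep s _ ih => exact ih.append_left [s]
  | drop hB _ ih => exact (hB.append_right _).trans ih

/-- Restricting to these nonterminals keeps the constructions below finite when `G.NT` is
infinite. -/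
def usedNonterminals : Set G.NT :=
  insert G.initial
    (⋃ r ∈ (G.rules : Set (ContextFreeRule T G.NT)), {B | .nonterminal B ∈ r.output})

theorem usedNonterminals_finite : (usedNonterminals G).Finite :=
  (G.rules.finite_toSet.biUnion fun r _ =>
    (List.finite_toSet r.output).preimage fun _ _ _ _ h => Symbol.nonterminal.inj h).insert _

theorem initial_mem_usedNonterminals : G.initial ∈ usedNonterminals G :=
  Set.mem_insert _ _

variable {G} in
theorem mem_usedNonterminals_of_mem_output {r : ContextFreeRule T G.NT} (hr : r ∈ G.rules)
    {B : G.NT} (hB : .nonterminal B ∈ r.output) : B ∈ usedNonterminals G :=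
  Set.mem_insert_of_mem _ (Set.mem_biUnion hr hB)

def properRules : Set (ContextFreeRule T G.NT) :=
  {r | r.input ∈ usedNonterminals G ∧
    (∃ B γ, G.Derives [.nonterminal r.input] [.nonterminal B] ∧ ⟨B, γ⟩ ∈ G.rules ∧
      DropsNullable G γ r.output) ∧
    r.output ≠ [] ∧ ∀ N, r.output ≠ [.nonterminal N]}

theorem properRules_finite : (properRules G).Finite := by
  refine (((usedNonterminals_finite G).prod
    (G.rules.finite_toSet.biUnion fun r _ => List.finite_toSet r.output.sublists)).image
      fun p => (⟨p.1, p.2⟩ : ContextFreeRule T G.NT)).subset ?_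
  rintro ⟨A, β⟩ ⟨hA, ⟨B, γ, -, hrule, hdrop⟩, -⟩
  exact ⟨(A, β), ⟨hA, Set.mem_biUnion hrule (by simpa using hdrop.sublist)⟩, rfl⟩

noncomputable abbrev properGrammar : ContextFreeGrammar.{0} T :=
  ⟨G.NT, G.initial, (properRules_finite G).toFinset⟩

variable {G}

theorem mem_properGrammar_rules {r : ContextFreeRule T G.NT} :
    r ∈ (properGrammar G).rules ↔ r ∈ properRules G :=
  Set.Finite.mem_toFinset _

theorem mem_usedNonterminals_of_mem_properRules {r : ContextFreeRule T G.NT}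
    (hr : r ∈ properRules G) {B : G.NT} (hB : .nonterminal B ∈ r.output) :
    B ∈ usedNonterminals G :=
  let ⟨_, ⟨_, _, _, hrule, hdrop⟩, _⟩ := hr
  mem_usedNonterminals_of_mem_output hrule (hdrop.sublist.subset hB)

theorem derives_of_properGrammar_derives {u v : List (Symbol T G.NT)}
    (h : (properGrammar G).Derives u v) : G.Derives u v := by
  induction h with
  | refl => exact Derives.refl _
  | tail _ hp ih =>
    obtain ⟨r, hr, hrw⟩ := hp
    obtain ⟨-, ⟨B, γ, hAB, hrule, hdrop⟩, -⟩ := mem_properGrammar_rules.mp hr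
    obtain ⟨p, q, rfl, rfl⟩ := hrw.exists_parts
    have hr : G.Derives [.nonterminal r.input] r.output :=
      hAB.trans ((produces_nonterminal_iff.mpr hrule).trans_derives hdrop.derives)
    exact ih.trans ((hr.append_left p).append_right q)

theorem mem_properRules_of_derives {A B : G.NT} {β : List (Symbol T G.NT)}
    (hA : A ∈ usedNonterminals G) (hAB : G.Derives [.nonterminal A] [.nonterminal B])
    (h : ⟨B, β⟩ ∈ properRules G) : ⟨A, β⟩ ∈ properRules G :=
  let ⟨_, ⟨C, γ, hBC, hrule, hdrop⟩, hβ⟩ := h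
  ⟨hA, ⟨C, γ, hAB.trans hBC, hrule, hdrop⟩, hβ⟩

theorem exists_dropsNullable_of_forall₂ {m : ℕ}
    (IH : ∀ B w, B ∈ usedNonterminals G → w ≠ [] →
      ∀ k ≤ m, G.DerivesIn [.nonterminal B] (w.map Symbol.terminal) k →
        (properGrammar G).Derives [.nonterminal B] (w.map Symbol.terminal))
    {γ : List (Symbol T G.NT)} {ws : List (List T)}
    (h : List.Forall₂ (fun s w => ∃ k ≤ m, G.DerivesIn [s] (w.map Symbol.terminal) k) γ ws)
    (hγ : ∀ B, .nonterminal B ∈ γ → B ∈ usedNonterminals G) :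
    ∃ β ws', DropsNullable G γ β ∧ ws'.flatten = ws.flatten ∧
      List.Forall₂ (fun s w => (properGrammar G).Derives [s] (w.map Symbol.terminal)) β ws' := by
  induction h with
  | nil => exact ⟨[], [], .nil, rfl, .nil⟩
  | @cons s w γ ws hs _ ih =>
    obtain ⟨β, ws', hdrop, hflat, hβ⟩ := ih fun B hB => hγ B (List.mem_cons_of_mem _ hB)
    obtain ⟨k, hk, hd⟩ := hs
    cases s with
    | terminal a =>
      obtain rfl : w = [a] := by
        simpa using Derives.eq_of_map_terminal (w := [a]) hd.derives
      exact ⟨_, [a] :: ws', .keep _ hdrop, by simp [hflat], .cons (Derives.refl _) hβ⟩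
    | nonterminal B =>
      by_cases hw : w = []
      · subst hw
        exact ⟨β, ws', .drop hd.derives hdrop, by simpa using hflat, hβ⟩
      · exact ⟨_, w :: ws', .keep _ hdrop, by simp [hflat],
          .cons (IH B w (hγ B (by simp)) hw k hk hd) hβ⟩

theorem properGrammar_derives_of_derivesIn (n : ℕ) {A : G.NT} {w : List T}
    (hA : A ∈ usedNonterminals G) (hw : w ≠ [])
    (h : G.DerivesIn [.nonterminal A] (w.map Symbol.terminal) n) :
    (properGrammar G).Derives [.nonterminal A] (w.map Symbol.terminal) := by
  induction n using Nat.strong_induction_on generalizing A w with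
  | _ n ihn =>
  obtain ⟨γ, m, rfl, hrule, hd⟩ := h.exists_mem_rules
  obtain ⟨ws, rfl, hws⟩ := hd.exists_pieces
  obtain ⟨β, ws', hdrop, hflat, hβ⟩ := exists_dropsNullable_of_forall₂
    (fun B w hB hw k hk => ihn k (by omega) hB hw) hws
    (fun B hB => mem_usedNonterminals_of_mem_output hrule hB)
  have hAβ : G.Derives [.nonterminal A] β :=
    (produces_nonterminal_iff.mpr hrule).trans_derives hdrop.derives
  rw [← hflat] at hw ⊢
  by_cases hunit : ∃ B, β = [.nonterminal B]
  · -- a renaming `A ⇒* B` is absorbed into the first rule used from `B`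
    obtain ⟨B, rfl⟩ := hunit
    obtain ⟨wB, _, hB, hnil, rfl⟩ := List.forall₂_cons_left_iff.mp hβ
    obtain rfl := List.forall₂_nil_left_iff.mp hnil
    obtain ⟨β', hrule', hd'⟩ := hB.exists_mem_rules
    refine (produces_nonterminal_iff.mpr ?_).trans_derives (by simpa using hd')
    exact mem_properGrammar_rules.mpr (mem_properRules_of_derives hA hAβ
      (mem_properGrammar_rules.mp hrule'))
  · have hβne : β ≠ [] := by
      rintro rfl
      exact hw (by simp [List.forall₂_nil_left_iff.mp hβ])
    refine (produces_nonterminal_iff.mpr (mem_properGrammar_rules.mpr ?_)).trans_derives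
      (derives_flatten_of_forall₂ hβ)
    exact ⟨hA, ⟨A, γ, Derives.refl _, hrule, hdrop⟩, hβne, fun N hN => hunit ⟨N, hN⟩⟩

end ProperGrammar

section FischerGrammar

variable (G : ContextFreeGrammar.{0} T)

def LiftsSymbol : Symbol T G.NT → Symbol T (Option (Set G.NT)) → Prop
  | .terminal a, .terminal b => a = b
  | .nonterminal B, .nonterminal (some 𝒜) => B ∈ 𝒜 ∧ 𝒜 ⊆ usedNonterminals G
  | _, _ => False

theorem finite_setOf_liftsSymbol (s : Symbol T G.NT) : {s' | LiftsSymbol G s s'}.Finite := by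
  cases s with
  | terminal a =>
    refine (Set.finite_singleton (Symbol.terminal a)).subset fun s' h => ?_
    rcases s' with b | _ | _ <;> simp_all [LiftsSymbol]
  | nonterminal B =>
    refine ((usedNonterminals_finite G).finite_subsets.image
      fun 𝒜 => Symbol.nonterminal (some 𝒜)).subset fun s' h => ?_
    rcases s' with b | _ | 𝒜 <;> simp_all [LiftsSymbol]

def shapes : Set (List (Symbol T (Option (Set G.NT)))) :=
  ⋃ r ∈ properRules G, {δ | List.Forall₂ (LiftsSymbol G) r.output δ}

def shapeLhs (δ : List (Symbol T (Option (Set G.NT)))) : Set G.NT :=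
  {A | ∃ γ, ⟨A, γ⟩ ∈ properRules G ∧ List.Forall₂ (LiftsSymbol G) γ δ}

/-- The new axiom is `none`; the other nonterminals are sets of nonterminals of `G`. -/
def fischerRules : Set (ContextFreeRule T (Option (Set G.NT))) :=
  (fun δ => ⟨some (shapeLhs G δ), δ⟩) '' shapes G ∪
    (fun 𝒜 => ⟨none, [.nonterminal (some 𝒜)]⟩) '' {𝒜 | 𝒜 ⊆ usedNonterminals G ∧ G.initial ∈ 𝒜} ∪
    {r | [] ∈ G.language ∧ r = ⟨none, []⟩}

theorem fischerRules_finite : (fischerRules G).Finite :=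
  ((((properRules_finite G).biUnion fun r _ =>
    List.finite_setOf_forall₂ (finite_setOf_liftsSymbol G) r.output).image _).union
    (((usedNonterminals_finite G).finite_subsets.subset fun _ h => h.1).image _)).union
    ((Set.finite_singleton _).subset fun _ h => h.2)

noncomputable abbrev fischerGrammar : ContextFreeGrammar.{0} T :=
  ⟨Option (Set G.NT), none, (fischerRules_finite G).toFinset⟩

variable {G}

theorem mem_fischerGrammar_rules {r : ContextFreeRule T (Option (Set G.NT))} :
    r ∈ (fischerGrammar G).rules ↔ r ∈ fischerRules G :=
  Set.Finite.mem_toFinset _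

@[simp]
theorem liftsSymbol_terminal_right {s : Symbol T G.NT} {a : T} :
    LiftsSymbol G s (.terminal a) ↔ s = .terminal a := by
  cases s <;> simp [LiftsSymbol]

theorem LiftsSymbol.exists_of_nonterminal_right {s : Symbol T G.NT} {N : Option (Set G.NT)}
    (h : LiftsSymbol G s (.nonterminal N)) :
    ∃ B 𝒜, s = .nonterminal B ∧ N = some 𝒜 ∧ B ∈ 𝒜 ∧ 𝒜 ⊆ usedNonterminals G := by
  rcases s with _ | B <;> rcases N with _ | 𝒜 <;> simp_all [LiftsSymbol]

theorem LiftsSymbol.exists_of_nonterminal_left {B : G.NT} {s' : Symbol T (Option (Set G.NT))}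
    (h : LiftsSymbol G (.nonterminal B) s') :
    ∃ 𝒜, s' = .nonterminal (some 𝒜) ∧ B ∈ 𝒜 ∧ 𝒜 ⊆ usedNonterminals G := by
  rcases s' with _ | _ | 𝒜 <;> simp_all [LiftsSymbol]

theorem eq_map_terminal_of_forall₂_liftsSymbol {γ : List (Symbol T G.NT)} {w : List T}
    (h : List.Forall₂ (LiftsSymbol G) γ (w.map Symbol.terminal)) :
    γ = w.map Symbol.terminal := by
  rw [List.forall₂_map_right_iff] at h
  have := List.forall₂_map_right_iff.mpr (h.imp fun _ _ => liftsSymbol_terminal_right.mp)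
  rwa [List.forall₂_eq_eq_eq] at this

theorem ne_nil_of_mem_shapes {δ : List (Symbol T (Option (Set G.NT)))} (hδ : δ ∈ shapes G) :
    δ ≠ [] := by
  rintro rfl
  obtain ⟨r, ⟨-, -, hr, -⟩, h⟩ := Set.mem_iUnion₂.mp hδ
  exact hr (List.forall₂_nil_right_iff.mp h)

theorem ne_singleton_nonterminal_of_mem_shapes {δ : List (Symbol T (Option (Set G.NT)))}
    (hδ : δ ∈ shapes G) (N : Option (Set G.NT)) : δ ≠ [.nonterminal N] := by
  rintro rfl
  obtain ⟨r, ⟨-, -, -, hr⟩, h⟩ := Set.mem_iUnion₂.mp hδ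
  obtain ⟨s, γ, hs, hγ, hout⟩ := List.forall₂_cons_right_iff.mp h
  obtain ⟨B, -, rfl, -⟩ := hs.exists_of_nonterminal_right
  exact hr B (by rw [hout, List.forall₂_nil_right_iff.mp hγ])

theorem mem_fischerGrammar_rules_cases {r : ContextFreeRule T (Option (Set G.NT))}
    (hr : r ∈ (fischerGrammar G).rules) :
    (r.output ∈ shapes G ∧ r.input = some (shapeLhs G r.output)) ∨
      (r.input = none ∧ (r.output = [] ∨ ∃ N, r.output = [.nonterminal N])) := by
  rcases mem_fischerGrammar_rules.mp hr with (⟨δ, hδ, rfl⟩ | ⟨𝒜, -, rfl⟩) | ⟨-, rfl⟩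
  · exact .inl ⟨hδ, rfl⟩
  · exact .inr ⟨rfl, .inr ⟨_, rfl⟩⟩
  · exact .inr ⟨rfl, .inl rfl⟩

theorem exists_properGrammar_produces {u v : List (Symbol T (Option (Set G.NT)))}
    (h : (fischerGrammar G).Produces u v) {u' : List (Symbol T G.NT)}
    (hu : List.Forall₂ (LiftsSymbol G) u' u) :
    ∃ v', List.Forall₂ (LiftsSymbol G) v' v ∧ (properGrammar G).Produces u' v' := by
  obtain ⟨r, hr, hrw⟩ := h
  obtain ⟨p, q, rfl, rfl⟩ := hrw.exists_parts
  obtain ⟨pm', q', rfl, hpm, hq⟩ := List.forall₂_append_right_iff.mp hu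
  obtain ⟨p', m', rfl, hp, hm⟩ := List.forall₂_append_right_iff.mp hpm
  obtain ⟨s, _, hs, hnil, rfl⟩ := List.forall₂_cons_right_iff.mp hm
  obtain rfl := List.forall₂_nil_right_iff.mp hnil
  obtain ⟨B, 𝒜, rfl, hin, hB, -⟩ := hs.exists_of_nonterminal_right
  rcases mem_fischerGrammar_rules_cases hr with ⟨-, hlhs⟩ | ⟨hnone, -⟩
  · obtain ⟨γ, hrule, hγ⟩ : B ∈ shapeLhs G r.output := by
      rwa [← Option.some_inj.mp (hin.symm.trans hlhs)]
    refine ⟨p' ++ γ ++ q', List.rel_append (List.rel_append hp hγ) hq,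
      ⟨⟨B, γ⟩, mem_properGrammar_rules.mpr hrule, ?_⟩⟩
    exact ContextFreeRule.rewrites_of_exists_parts ⟨B, γ⟩ p' q'
  · exact absurd (hin.symm.trans hnone) (by simp)

theorem exists_properGrammar_derives {u v : List (Symbol T (Option (Set G.NT)))}
    (h : (fischerGrammar G).Derives u v) {u' : List (Symbol T G.NT)}
    (hu : List.Forall₂ (LiftsSymbol G) u' u) :
    ∃ v', List.Forall₂ (LiftsSymbol G) v' v ∧ (properGrammar G).Derives u' v' := by
  induction h with
  | refl => exact ⟨u', hu, Derives.refl _⟩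
  | tail _ hp ih =>
    obtain ⟨v', hv', hd⟩ := ih
    obtain ⟨w', hw', hp'⟩ := exists_properGrammar_produces hp hv'
    exact ⟨w', hw', hd.trans_produces hp'⟩

theorem derives_of_fischerGrammar_derives {𝒟 : Set G.NT} {D : G.NT} (hD : D ∈ 𝒟)
    (h𝒟 : 𝒟 ⊆ usedNonterminals G) {v : List (Symbol T (Option (Set G.NT)))}
    (h : (fischerGrammar G).Derives [.nonterminal (some 𝒟)] v) :
    ∃ v', List.Forall₂ (LiftsSymbol G) v' v ∧ G.Derives [.nonterminal D] v' :=
  (exists_properGrammar_derives h (u' := [.nonterminal D]) (.cons ⟨hD, h𝒟⟩ .nil)).imp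
    fun _ ⟨hv', hd⟩ => ⟨hv', derives_of_properGrammar_derives hd⟩

theorem leftTerminals_fischerGrammar_subset {𝒟 : Set G.NT} {D : G.NT} (hD : D ∈ 𝒟)
    (h𝒟 : 𝒟 ⊆ usedNonterminals G) :
    leftTerminals (fischerGrammar G) (some 𝒟) ⊆ leftTerminals G D := by
  rintro a ⟨α, h | ⟨B, h⟩⟩
  · obtain ⟨v', hv', hd⟩ := derives_of_fischerGrammar_derives hD h𝒟 h
    obtain ⟨s, α', hs, -, rfl⟩ := List.forall₂_cons_right_iff.mp hv'
    exact ⟨α', .inl (by rwa [← liftsSymbol_terminal_right.mp hs])⟩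
  · obtain ⟨v', hv', hd⟩ := derives_of_fischerGrammar_derives hD h𝒟 h
    obtain ⟨s, _, hs, hv'', rfl⟩ := List.forall₂_cons_right_iff.mp hv'
    obtain ⟨t, α', ht, -, rfl⟩ := List.forall₂_cons_right_iff.mp hv''
    obtain ⟨C, -, rfl, -⟩ := hs.exists_of_nonterminal_right
    exact ⟨α', .inr ⟨C, by rwa [← liftsSymbol_terminal_right.mp ht]⟩⟩

theorem rightTerminals_fischerGrammar_subset {𝒟 : Set G.NT} {D : G.NT} (hD : D ∈ 𝒟)
    (h𝒟 : 𝒟 ⊆ usedNonterminals G) :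
    rightTerminals (fischerGrammar G) (some 𝒟) ⊆ rightTerminals G D := by
  rintro a ⟨α, h | ⟨B, h⟩⟩
  · obtain ⟨v', hv', hd⟩ := derives_of_fischerGrammar_derives hD h𝒟 h
    obtain ⟨α', _, rfl, -, hv''⟩ := List.forall₂_append_right_iff.mp hv'
    obtain ⟨s, _, hs, hnil, rfl⟩ := List.forall₂_cons_right_iff.mp hv''
    obtain rfl := List.forall₂_nil_right_iff.mp hnil
    exact ⟨α', .inl (by rwa [← liftsSymbol_terminal_right.mp hs])⟩
  · obtain ⟨v', hv', hd⟩ := derives_of_fischerGrammar_derives hD h𝒟 h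
    obtain ⟨α', _, rfl, -, hv''⟩ := List.forall₂_append_right_iff.mp hv'
    obtain ⟨s, _, hs, hv₃, rfl⟩ := List.forall₂_cons_right_iff.mp hv''
    obtain ⟨t, _, ht, hnil, rfl⟩ := List.forall₂_cons_right_iff.mp hv₃
    obtain rfl := List.forall₂_nil_right_iff.mp hnil
    obtain ⟨C, -, rfl, -⟩ := ht.exists_of_nonterminal_right
    exact ⟨α', .inr ⟨C, by rwa [← liftsSymbol_terminal_right.mp hs]⟩⟩

theorem refinesSymbol_of_liftsSymbol {s : Symbol T G.NT} {s' : Symbol T (Option (Set G.NT))}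
    (h : LiftsSymbol G s s') : RefinesSymbol (fischerGrammar G) G s' s := by
  rcases s' with a | N
  · rw [liftsSymbol_terminal_right.mp h]
    rfl
  · obtain ⟨D, 𝒟, rfl, rfl, hD, h𝒟⟩ := h.exists_of_nonterminal_right
    exact ⟨leftTerminals_fischerGrammar_subset hD h𝒟, rightTerminals_fischerGrammar_subset hD h𝒟⟩

theorem DropsNullable.contracts {γ β : List (Symbol T G.NT)} (hdrop : DropsNullable G γ β)
    {δ : List (Symbol T (Option (Set G.NT)))} (hδ : List.Forall₂ (LiftsSymbol G) β δ) :
    Contracts (fischerGrammar G) G δ γ := by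
  induction hdrop generalizing δ with
  | nil => exact List.forall₂_nil_left_iff.mp hδ ▸ .nil
  | keep s _ ih =>
    obtain ⟨s', δ, hs, hδ', rfl⟩ := List.forall₂_cons_left_iff.mp hδ
    exact .cons (refinesSymbol_of_liftsSymbol hs) (ih hδ')
  | drop _ _ ih => exact .drop _ (ih hδ)

theorem fischerGrammar_rulesContract : RulesContract (fischerGrammar G) G := by
  intro r hr hlen
  rcases mem_fischerGrammar_rules_cases hr with ⟨hδ, -⟩ | ⟨-, hout | ⟨N, hout⟩⟩
  · obtain ⟨r₂, ⟨-, ⟨B, γ, -, hrule, hdrop⟩, -⟩, hlift⟩ := Set.mem_iUnion₂.mp hδ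
    exact ⟨⟨B, γ⟩, hrule, hdrop.contracts hlift⟩
  all_goals simp [hout] at hlen

theorem exists_liftsSymbol_fischerGrammar_derives (n : ℕ) {s : Symbol T G.NT} {w : List T}
    (hs : ∀ B, s = .nonterminal B → B ∈ usedNonterminals G)
    (h : (properGrammar G).DerivesIn [s] (w.map Symbol.terminal) n) :
    ∃ s', LiftsSymbol G s s' ∧ (fischerGrammar G).Derives [s'] (w.map Symbol.terminal) := by
  induction n using Nat.strong_induction_on generalizing s w with
  | _ n ihn =>
  cases s with
  | terminal a =>
    obtain rfl : w = [a] := by simpa using Derives.eq_of_map_terminal (w := [a]) h.derives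
    exact ⟨.terminal a, rfl, Derives.refl _⟩
  | nonterminal B =>
    obtain ⟨β, m, rfl, hrule, hd⟩ := h.exists_mem_rules
    replace hrule := mem_properGrammar_rules.mp hrule
    obtain ⟨ws, rfl, hws⟩ := hd.exists_pieces
    obtain ⟨δ, hβδ, hδ⟩ := ((List.forall₂_and_left _ _).mpr ⟨fun _ h => h, hws⟩).exists_middle
      fun s _ ⟨hsβ, k, hk, hd⟩ => ihn k (by omega)
        (fun _ hs => mem_usedNonterminals_of_mem_properRules hrule (hs ▸ hsβ)) hd
    have hrule' : ⟨some (shapeLhs G δ), δ⟩ ∈ (fischerGrammar G).rules :=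
      mem_fischerGrammar_rules.mpr (.inl (.inl ⟨δ, Set.mem_biUnion hrule hβδ, rfl⟩))
    refine ⟨.nonterminal (some (shapeLhs G δ)), ⟨⟨β, hrule, hβδ⟩, fun A ⟨_, hA, _⟩ => hA.1⟩, ?_⟩
    exact (produces_nonterminal_iff.mpr hrule').trans_derives (derives_flatten_of_forall₂ hδ)

theorem fischerGrammar_language : (fischerGrammar G).language = G.language := by
  ext w
  constructor
  · intro h
    obtain ⟨γ, hrule, hd⟩ := Derives.exists_mem_rules h
    rcases mem_fischerGrammar_rules.mp hrule with (⟨δ, -, hr⟩ | ⟨𝒜, ⟨h𝒜, hS⟩, hr⟩) | ⟨hε, hr⟩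
    · simp at hr
    · cases hr
      obtain ⟨v', hv', hd'⟩ := derives_of_fischerGrammar_derives hS h𝒜 hd
      rwa [eq_map_terminal_of_forall₂_liftsSymbol hv'] at hd'
    · cases hr
      obtain rfl : w = [] := by simpa using Derives.eq_of_map_terminal (w := []) hd
      exact hε
  · intro h
    rcases eq_or_ne w [] with rfl | hw
    · exact (produces_nonterminal_iff.mpr (mem_fischerGrammar_rules.mpr (.inr ⟨h, rfl⟩))).single
    obtain ⟨n, hn⟩ := derives_iff_exists_derivesIn.mp h
    obtain ⟨n', hn'⟩ := derives_iff_exists_derivesIn.mp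
      (properGrammar_derives_of_derivesIn n (initial_mem_usedNonterminals G) hw hn)
    obtain ⟨s', hs', hd⟩ := exists_liftsSymbol_fischerGrammar_derives n'
      (fun _ hB => Symbol.nonterminal.inj hB ▸ initial_mem_usedNonterminals G) hn'
    obtain ⟨𝒜, rfl, hS, h𝒜⟩ := hs'.exists_of_nonterminal_left
    have hrule : ⟨none, [.nonterminal (some 𝒜)]⟩ ∈ (fischerGrammar G).rules :=
      mem_fischerGrammar_rules.mpr (.inl (.inr ⟨𝒜, ⟨h𝒜, hS⟩, rfl⟩))
    exact (produces_nonterminal_iff.mpr hrule).trans_derives hd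

theorem fischerGrammar_rule_eq_of_output_eq {r₁ r₂ : ContextFreeRule T (Option (Set G.NT))}
    (hr₁ : r₁ ∈ (fischerGrammar G).rules) (hr₂ : r₂ ∈ (fischerGrammar G).rules)
    (hout : r₁.output = r₂.output) : r₁ = r₂ := by
  have hshort : ∀ {δ}, δ ∈ shapes G → ¬ (δ = [] ∨ ∃ N, δ = [.nonterminal N]) :=
    fun hδ h => h.elim (ne_nil_of_mem_shapes hδ) fun ⟨N, h⟩ =>
      ne_singleton_nonterminal_of_mem_shapes hδ N h
  have hin : r₁.input = r₂.input := by
    rcases mem_fischerGrammar_rules_cases hr₁ with ⟨hδ₁, h₁⟩ | ⟨h₁, ho₁⟩ <;>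
      rcases mem_fischerGrammar_rules_cases hr₂ with ⟨hδ₂, h₂⟩ | ⟨h₂, ho₂⟩
    · rw [h₁, h₂, hout]
    · exact (hshort hδ₁ (hout ▸ ho₂)).elim
    · exact (hshort hδ₂ (hout ▸ ho₁)).elim
    · rw [h₁, h₂]
  cases r₁
  cases r₂
  cases hin
  cases hout
  rfl

end FischerGrammar

end OP

open OP in
/-- **Fischer normal form for operator precedence grammars.**
For every operator precedence grammar `G` there exists an operator precedence grammar
`G'` with `L(G') = L(G)` in Fischer normal form: `G'` is invertible (no two productions
share the same right-hand side), has no empty rules except possibly `S → ε`, and no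
renaming rules except possibly those whose left-hand side is the axiom `S`. -/
theorem fischer_normal_form {T : Type} (G : ContextFreeGrammar.{0} T) (hG : IsOPG G) :
    ∃ G' : ContextFreeGrammar.{0} T,
      IsOPG G' ∧
      G'.language = G.language ∧
      (∀ r₁ ∈ G'.rules, ∀ r₂ ∈ G'.rules, r₁.output = r₂.output → r₁ = r₂) ∧
      (∀ r ∈ G'.rules, r.output = [] → r.input = G'.initial) ∧
      (∀ r ∈ G'.rules, ∀ B : G'.NT, r.output = [Symbol.nonterminal B] →
        r.input = G'.initial) := by
  refine ⟨fischerGrammar G, hG.of_rulesContract fischerGrammar_rulesContract,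
    fischerGrammar_language, fun r₁ hr₁ r₂ hr₂ => fischerGrammar_rule_eq_of_output_eq hr₁ hr₂,
    fun r hr hout => ?_, fun r hr B hout => ?_⟩
  · rcases mem_fischerGrammar_rules_cases hr with ⟨hδ, -⟩ | ⟨hnone, -⟩
    · exact absurd hout (ne_nil_of_mem_shapes hδ)
    · exact hnone
  · rcases mem_fischerGrammar_rules_cases hr with ⟨hδ, -⟩ | ⟨hnone, -⟩
    · exact absurd hout (ne_singleton_nonterminal_of_mem_shapes hδ B)
    · exact hnone
end
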